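/- arXiv:1208.3321 — 5 statements merged into one kernel-verified Lean document; each statement's English description precedes it below -/
import Mathlib

section
/- Let X_1,…,X_n (n ≥ 4) be i.i.d. p-dimensional random vectors with mean μ, covariance matrix Σ = (σ_{ij}), and finite fourth moments of all components. Then for every q ∈ {0,…,p−1}, the statistic D̂_{nq} is an unbiased estimator of D_q: E(D̂_{nq}) = Σ_{l=1}^{p−q} σ_{l,l+q}². -/
open MeasureTheory ProbabilityTheory Matrix
open scoped ENNReal

noncomputable section

/-- Falling factorial `P_n^b = n!/(n-b)!`. -/
def Pfall (n b : ℕ) : ℝ := ∏ i ∈ Finset.range b, ((n : ℝ) - (i : ℝ))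

/-- The statistic `D̂_{nq}`. -/
def Dhat (n p q : ℕ) (x : Fin n → Fin p → ℝ) : ℝ :=
  ∑ l : Fin p, ∑ l' : Fin p,
    if (l' : ℕ) = (l : ℕ) + q then
      (Pfall n 2)⁻¹ *
          (∑ i : Fin n, ∑ j : Fin n,
            if i ≠ j then (x i l * x i l') * (x j l * x j l') else 0)
        - 2 * (Pfall n 3)⁻¹ *
          (∑ i : Fin n, ∑ j : Fin n, ∑ k : Fin n,
            if i ≠ j ∧ i ≠ k ∧ j ≠ k then x i l * x k l' * (x j l * x j l') else 0)
        + (Pfall n 4)⁻¹ *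
          (∑ i : Fin n, ∑ j : Fin n, ∑ k : Fin n, ∑ m : Fin n,
            if i ≠ j ∧ i ≠ k ∧ i ≠ m ∧ j ≠ k ∧ j ≠ m ∧ k ≠ m then
              x i l * x j l' * x k l * x m l' else 0)
    else 0

/-- `D_q`, the sum of squares of the `q`-th sub-diagonal of `S`. -/
def Dq {p : ℕ} (S : Matrix (Fin p) (Fin p) ℝ) (q : ℕ) : ℝ :=
  ∑ i : Fin p, ∑ j : Fin p, if (j : ℕ) = (i : ℕ) + q then (S i j) ^ 2 else 0

section helpers
variable {Ω : Type} [MeasurableSpace Ω] {μ : Measure Ω} [IsProbabilityMeasure μ]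

lemma memL2_mul {f g : Ω → ℝ} (hf : MemLp f 4 μ) (hg : MemLp g 4 μ) :
    MemLp (fun ω => f ω * g ω) 2 μ := by
  haveI : ENNReal.HolderTriple 4 4 2 := ⟨by
    rw [← two_mul, show (4:ℝ≥0∞) = 2 * 2 by norm_num, ENNReal.mul_inv (by simp) (by simp),
      ← mul_assoc, ENNReal.mul_inv_cancel (by simp) (by simp), one_mul]⟩
  have h := hf.smul (φ := g) hg (r := 2)
  have e : g • f = fun ω => f ω * g ω := by funext ω; simp [mul_comm]
  rwa [e] at h

lemma integrable_mul2 {f g : Ω → ℝ} (hf : MemLp f 2 μ) (hg : MemLp g 2 μ) :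
    Integrable (fun ω => f ω * g ω) μ := by
  have h := hf.smul (φ := g) hg (r := 1)
  have e : g • f = fun ω => f ω * g ω := by funext ω; simp [mul_comm]
  rw [e] at h
  exact memLp_one_iff_integrable.mp h

lemma integrable_mul4 {f g h k : Ω → ℝ} (hf : MemLp f 4 μ) (hg : MemLp g 4 μ)
    (hh : MemLp h 4 μ) (hk : MemLp k 4 μ) :
    Integrable (fun ω => f ω * g ω * h ω * k ω) μ := by
  have := integrable_mul2 (memL2_mul hf hg) (memL2_mul hh hk)
  simpa [mul_assoc] using this

lemma sum_ite_notmem {n : ℕ} (t : Finset (Fin n)) (c : ℝ) :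
    ∑ x : Fin n, (if x ∉ t then c else 0) = ((n : ℝ) - t.card) * c := by
  rw [Finset.sum_ite, Finset.sum_const, Finset.sum_const_zero, add_zero]
  have h1 : (Finset.univ.filter (fun x : Fin n => x ∉ t)) = tᶜ := by
    ext x; simp
  rw [h1, Finset.card_compl, nsmul_eq_mul]
  have h2 : t.card ≤ n := by
    simpa using t.card_le_univ
  simp only [Fintype.card_fin]
  rw [Nat.cast_sub h2]

lemma count2 {n : ℕ} (c : ℝ) :
    (∑ i : Fin n, ∑ j : Fin n, if i ≠ j then c else 0) = Pfall n 2 * c := by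
  have h : ∀ i : Fin n, (∑ j : Fin n, if i ≠ j then c else 0) = ((n:ℝ) - 1) * c := by
    intro i
    have h0 := sum_ite_notmem ({i} : Finset (Fin n)) c
    simp only [Finset.mem_singleton, Finset.card_singleton, Nat.cast_one] at h0
    rw [← h0]
    exact Finset.sum_congr rfl fun j _ => by
      congr 1; simp [ne_comm, eq_comm]
  rw [Finset.sum_congr rfl (fun i _ => h i), Finset.sum_const, nsmul_eq_mul]
  simp [Pfall, Finset.prod_range_succ]
  ring

lemma count3 {n : ℕ} (c : ℝ) :
    (∑ i : Fin n, ∑ j : Fin n, ∑ k : Fin n,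
      if i ≠ j ∧ i ≠ k ∧ j ≠ k then c else 0) = Pfall n 3 * c := by
  have h : ∀ i j : Fin n, (∑ k : Fin n, if i ≠ j ∧ i ≠ k ∧ j ≠ k then c else 0)
      = if i ≠ j then ((n:ℝ) - 2) * c else 0 := by
    intro i j
    by_cases hij : i = j
    · simp [hij]
    · rw [if_pos hij]
      have h0 := sum_ite_notmem ({i, j} : Finset (Fin n)) c
      rw [Finset.card_insert_of_notMem (by simpa using hij), Finset.card_singleton] at h0
      push_cast at h0
      rw [← h0]
      refine Finset.sum_congr rfl fun k _ => ?_
      congr 1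
      simp only [Finset.mem_insert, Finset.mem_singleton, not_or, eq_iff_iff]
      constructor
      · rintro ⟨-, h2, h3⟩; exact ⟨Ne.symm h2, Ne.symm h3⟩
      · rintro ⟨h2, h3⟩; exact ⟨hij, Ne.symm h2, Ne.symm h3⟩
  have h2 : (∑ i : Fin n, ∑ j : Fin n, ∑ k : Fin n,
      if i ≠ j ∧ i ≠ k ∧ j ≠ k then c else 0)
      = ∑ i : Fin n, ∑ j : Fin n, if i ≠ j then ((n:ℝ) - 2) * c else 0 := by
    refine Finset.sum_congr rfl fun i _ => Finset.sum_congr rfl fun j _ => h i j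
  rw [h2, count2]
  simp [Pfall, Finset.prod_range_succ]
  ring

lemma count4 {n : ℕ} (c : ℝ) :
    (∑ i : Fin n, ∑ j : Fin n, ∑ k : Fin n, ∑ m : Fin n,
      if i ≠ j ∧ i ≠ k ∧ i ≠ m ∧ j ≠ k ∧ j ≠ m ∧ k ≠ m then c else 0) = Pfall n 4 * c := by
  have h : ∀ i j k : Fin n,
      (∑ m : Fin n, if i ≠ j ∧ i ≠ k ∧ i ≠ m ∧ j ≠ k ∧ j ≠ m ∧ k ≠ m then c else 0)
      = if i ≠ j ∧ i ≠ k ∧ j ≠ k then ((n:ℝ) - 3) * c else 0 := by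
    intro i j k
    by_cases hd : i ≠ j ∧ i ≠ k ∧ j ≠ k
    · rw [if_pos hd]
      obtain ⟨hij, hik, hjk⟩ := hd
      have h0 := sum_ite_notmem ({i, j, k} : Finset (Fin n)) c
      have hcard : ({i, j, k} : Finset (Fin n)).card = 3 := by
        rw [Finset.card_insert_of_notMem (by simp [hij, hik]),
          Finset.card_insert_of_notMem (by simpa using hjk), Finset.card_singleton]
      rw [hcard] at h0
      push_cast at h0
      rw [← h0]
      refine Finset.sum_congr rfl fun m _ => ?_
      congr 1
      simp only [Finset.mem_insert, Finset.mem_singleton, not_or, eq_iff_iff]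
      constructor
      · rintro ⟨-, -, h3, -, h5, h6⟩; exact ⟨Ne.symm h3, Ne.symm h5, Ne.symm h6⟩
      · rintro ⟨h3, h5, h6⟩; exact ⟨hij, hik, Ne.symm h3, hjk, Ne.symm h5, Ne.symm h6⟩
    · rw [if_neg hd]
      refine Finset.sum_eq_zero fun m _ => ?_
      rw [if_neg]
      rintro ⟨h1, h2, -, h4, -, -⟩
      exact hd ⟨h1, h2, h4⟩
  have h2 : (∑ i : Fin n, ∑ j : Fin n, ∑ k : Fin n, ∑ m : Fin n,
      if i ≠ j ∧ i ≠ k ∧ i ≠ m ∧ j ≠ k ∧ j ≠ m ∧ k ≠ m then c else 0)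
      = ∑ i : Fin n, ∑ j : Fin n, ∑ k : Fin n,
        if i ≠ j ∧ i ≠ k ∧ j ≠ k then ((n:ℝ) - 3) * c else 0 := by
    refine Finset.sum_congr rfl fun i _ => Finset.sum_congr rfl fun j _ =>
      Finset.sum_congr rfl fun k _ => h i j k
  rw [h2, count3]
  simp [Pfall, Finset.prod_range_succ]
  ring

lemma Pfall_pos {n b : ℕ} (h : b ≤ n) : 0 < Pfall n b := by
  refine Finset.prod_pos fun i hi => ?_
  rw [Finset.mem_range] at hi
  have : (i : ℝ) < (n : ℝ) := by exact_mod_cast lt_of_lt_of_le hi h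
  linarith

end helpers

/-- `D̂_{nq}` is an unbiased estimator of `D_q = ∑_l σ_{l,l+q}²` for i.i.d. data with
mean μ, covariance Σ and finite fourth moments. -/
theorem Dhat_unbiased
    {Ω : Type} [MeasurableSpace Ω] (μ : Measure Ω) [IsProbabilityMeasure μ]
    (n p : ℕ) (hn : 4 ≤ n)
    (X : Fin n → Ω → Fin p → ℝ)
    (μv : Fin p → ℝ) (S : Matrix (Fin p) (Fin p) ℝ)
    (hmeas : ∀ i, Measurable (X i))
    (hindep : iIndepFun X μ)
    (hident : ∀ i j, Measure.map (X i) μ = Measure.map (X j) μ)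
    (hmom : ∀ i l, MemLp (fun ω => X i ω l) 4 μ)
    (hmean : ∀ i l, ∫ ω, X i ω l ∂μ = μv l)
    (hcov : ∀ i l l', ∫ ω, (X i ω l - μv l) * (X i ω l' - μv l') ∂μ = S l l')
    (q : ℕ) (hq : q ≤ p - 1) :
    ∫ ω, Dhat n p q (fun i => X i ω) ∂μ = Dq S q := by
  classical
  have i0 : Fin n := ⟨0, by omega⟩
  have mA : ∀ (i : Fin n) (l : Fin p), Measurable (fun ω => X i ω l) :=
    fun i l => (measurable_pi_apply l).comp (hmeas i)
  have hmom2 : ∀ i l, MemLp (fun ω => X i ω l) 2 μ :=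
    fun i l => (hmom i l).mono_exponent (by norm_num)
  have hint1 : ∀ i l, Integrable (fun ω => X i ω l) μ :=
    fun i l => (hmom i l).integrable (by norm_num)
  have hAB : ∀ i (l l' : Fin p), Integrable (fun ω => X i ω l * X i ω l') μ :=
    fun i l l' => integrable_mul2 (hmom2 i l) (hmom2 i l')
  have hint2 : ∀ (l l' : Fin p) i j,
      Integrable (fun ω => (X i ω l * X i ω l') * (X j ω l * X j ω l')) μ := fun l l' i j =>
    (integrable_mul4 (hmom i l) (hmom i l') (hmom j l) (hmom j l')).congr
      (Filter.Eventually.of_forall fun ω => by ring)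
  have hint3 : ∀ (l l' : Fin p) i j k,
      Integrable (fun ω => X i ω l * X k ω l' * (X j ω l * X j ω l')) μ := fun l l' i j k =>
    (integrable_mul4 (hmom i l) (hmom k l') (hmom j l) (hmom j l')).congr
      (Filter.Eventually.of_forall fun ω => by ring)
  have hint4 : ∀ (l l' : Fin p) i j k m,
      Integrable (fun ω => X i ω l * X j ω l' * X k ω l * X m ω l') μ := fun l l' i j k m =>
    integrable_mul4 (hmom i l) (hmom j l') (hmom k l) (hmom m l')
  -- integrability of the three big sums
  have hintF2 : ∀ (l l' : Fin p), Integrable (fun ω => ∑ i : Fin n, ∑ j : Fin n,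
      if i ≠ j then (X i ω l * X i ω l') * (X j ω l * X j ω l') else 0) μ := by
    intro l l'
    refine integrable_finset_sum _ fun i _ => integrable_finset_sum _ fun j _ => ?_
    by_cases h : i ≠ j
    · simpa only [if_pos h] using hint2 l l' i j
    · simp only [if_neg h]
      exact integrable_const 0
  have hintF3 : ∀ (l l' : Fin p), Integrable (fun ω => ∑ i : Fin n, ∑ j : Fin n, ∑ k : Fin n,
      if i ≠ j ∧ i ≠ k ∧ j ≠ k then X i ω l * X k ω l' * (X j ω l * X j ω l') else 0) μ := by
    intro l l'
    refine integrable_finset_sum _ fun i _ => integrable_finset_sum _ fun j _ =>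
      integrable_finset_sum _ fun k _ => ?_
    by_cases h : i ≠ j ∧ i ≠ k ∧ j ≠ k
    · simpa only [if_pos h] using hint3 l l' i j k
    · simp only [if_neg h]
      exact integrable_const 0
  have hintF4 : ∀ (l l' : Fin p), Integrable (fun ω => ∑ i : Fin n, ∑ j : Fin n, ∑ k : Fin n,
      ∑ m : Fin n, if i ≠ j ∧ i ≠ k ∧ i ≠ m ∧ j ≠ k ∧ j ≠ m ∧ k ≠ m then
        X i ω l * X j ω l' * X k ω l * X m ω l' else 0) μ := by
    intro l l'
    refine integrable_finset_sum _ fun i _ => integrable_finset_sum _ fun j _ =>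
      integrable_finset_sum _ fun k _ => integrable_finset_sum _ fun m _ => ?_
    by_cases h : i ≠ j ∧ i ≠ k ∧ i ≠ m ∧ j ≠ k ∧ j ≠ m ∧ k ≠ m
    · simpa only [if_pos h] using hint4 l l' i j k m
    · simp only [if_neg h]
      exact integrable_const 0
  have hintG : ∀ (l l' : Fin p), Integrable (fun ω =>
      (Pfall n 2)⁻¹ * (∑ i : Fin n, ∑ j : Fin n,
          if i ≠ j then (X i ω l * X i ω l') * (X j ω l * X j ω l') else 0)
        - 2 * (Pfall n 3)⁻¹ * (∑ i : Fin n, ∑ j : Fin n, ∑ k : Fin n,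
          if i ≠ j ∧ i ≠ k ∧ j ≠ k then X i ω l * X k ω l' * (X j ω l * X j ω l') else 0)
        + (Pfall n 4)⁻¹ * (∑ i : Fin n, ∑ j : Fin n, ∑ k : Fin n, ∑ m : Fin n,
          if i ≠ j ∧ i ≠ k ∧ i ≠ m ∧ j ≠ k ∧ j ≠ m ∧ k ≠ m then
            X i ω l * X j ω l' * X k ω l * X m ω l' else 0)) μ := fun l l' =>
    (((hintF2 l l').const_mul _).sub ((hintF3 l l').const_mul _)).add ((hintF4 l l').const_mul _)
  -- the key per-(l,l') computation
  have key : ∀ l l' : Fin p, (∫ ω,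
      ((Pfall n 2)⁻¹ * (∑ i : Fin n, ∑ j : Fin n,
          if i ≠ j then (X i ω l * X i ω l') * (X j ω l * X j ω l') else 0)
        - 2 * (Pfall n 3)⁻¹ * (∑ i : Fin n, ∑ j : Fin n, ∑ k : Fin n,
          if i ≠ j ∧ i ≠ k ∧ j ≠ k then X i ω l * X k ω l' * (X j ω l * X j ω l') else 0)
        + (Pfall n 4)⁻¹ * (∑ i : Fin n, ∑ j : Fin n, ∑ k : Fin n, ∑ m : Fin n,
          if i ≠ j ∧ i ≠ k ∧ i ≠ m ∧ j ≠ k ∧ j ≠ m ∧ k ≠ m then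
            X i ω l * X j ω l' * X k ω l * X m ω l' else 0)) ∂μ) = (S l l') ^ 2 := by
    intro l l'
    set a : ℝ := ∫ ω, X i0 ω l * X i0 ω l' ∂μ with ha_def
    have hg : Measurable (fun v : Fin p → ℝ => v l * v l') :=
      (measurable_pi_apply l).mul (measurable_pi_apply l')
    have ha : ∀ i, ∫ ω, X i ω l * X i ω l' ∂μ = a := by
      intro i
      rw [ha_def]
      calc ∫ ω, X i ω l * X i ω l' ∂μ
          = ∫ v, v l * v l' ∂(μ.map (X i)) :=
            (integral_map (hmeas i).aemeasurable hg.aestronglyMeasurable).symm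
        _ = ∫ v, v l * v l' ∂(μ.map (X i0)) := by rw [hident i i0]
        _ = ∫ ω, X i0 ω l * X i0 ω l' ∂μ :=
            integral_map (hmeas i0).aemeasurable hg.aestronglyMeasurable
    have hcovS : S l l' = a - μv l * μv l' := by
      have h := hcov i0 l l'
      have e : (fun ω => (X i0 ω l - μv l) * (X i0 ω l' - μv l')) =
          fun ω => (X i0 ω l * X i0 ω l' - (μv l' * X i0 ω l + μv l * X i0 ω l'))
            + μv l * μv l' := by
        funext ω; ring
      rw [show (∫ ω, (X i0 ω l - μv l) * (X i0 ω l' - μv l') ∂μ)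
            = ∫ ω, ((X i0 ω l * X i0 ω l' - (μv l' * X i0 ω l + μv l * X i0 ω l'))
              + μv l * μv l') ∂μ from by rw [e]] at h
      have I2 : Integrable (fun ω => μv l' * X i0 ω l + μv l * X i0 ω l') μ :=
        ((hint1 i0 l).const_mul _).add ((hint1 i0 l').const_mul _)
      have I1 : Integrable (fun ω =>
          X i0 ω l * X i0 ω l' - (μv l' * X i0 ω l + μv l * X i0 ω l')) μ :=
        (hAB i0 l l').sub I2
      rw [integral_add I1 (integrable_const _),
          integral_sub (hAB i0 l l') I2,
          integral_add ((hint1 i0 l).const_mul _) ((hint1 i0 l').const_mul _),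
          integral_const_mul, integral_const_mul, integral_const, hmean, hmean, ha i0] at h
      simp only [measure_univ, ENNReal.toReal_one, smul_eq_mul, one_mul, probReal_univ] at h
      rw [← h]; ring
    -- pair term
    have T2 : ∀ i j : Fin n, i ≠ j →
        (∫ ω, (X i ω l * X i ω l') * (X j ω l * X j ω l') ∂μ) = a * a := by
      intro i j hij
      have hC : ∀ i' : Fin n, Measurable (fun ω => X i' ω l * X i' ω l') :=
        fun i' => (mA i' l).mul (mA i' l')
      have hInd : IndepFun (fun ω => X i ω l * X i ω l') (fun ω => X j ω l * X j ω l') μ :=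
        (hindep.indepFun hij).comp hg hg
      have h := hInd.integral_mul_eq_mul_integral (hC i).aestronglyMeasurable (hC j).aestronglyMeasurable
      rw [ha i, ha j] at h
      exact h
    -- triple term
    have T3 : ∀ i j k : Fin n, i ≠ j → i ≠ k → j ≠ k →
        (∫ ω, X i ω l * X k ω l' * (X j ω l * X j ω l') ∂μ) = μv l * μv l' * a := by
      intro i j k hij hik hjk
      set g : Fin n → (Fin p → ℝ) → ℝ := fun i' =>
        if i' = i then (fun v => v l) else if i' = k then (fun v => v l')
        else (fun v => v l * v l') with hgdef
      have hgm : ∀ i', Measurable (g i') := by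
        intro i'
        simp only [hgdef]
        split_ifs
        · exact measurable_pi_apply l
        · exact measurable_pi_apply l'
        · exact hg
      set Z : Fin n → Ω → ℝ := fun i' => (g i') ∘ (X i') with hZdef
      have hZind : iIndepFun Z μ := hindep.comp g hgm
      have hZm : ∀ i', Measurable (Z i') := fun i' => (hgm i').comp (hmeas i')
      have hZi : Z i = fun ω => X i ω l := by
        funext ω; simp [hZdef, hgdef]
      have hZk : Z k = fun ω => X k ω l' := by
        funext ω; simp [hZdef, hgdef, Ne.symm hik]
      have hZj : Z j = fun ω => X j ω l * X j ω l' := by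
        funext ω; simp [hZdef, hgdef, Ne.symm hij, hjk]
      have hInd1 : IndepFun (Z i * Z k) (Z j) μ :=
        hZind.indepFun_mul_left hZm i k j hij (Ne.symm hjk)
      have e1 := hInd1.integral_mul_eq_mul_integral ((hZm i).mul (hZm k)).aestronglyMeasurable
        (hZm j).aestronglyMeasurable
      have e2 := (hZind.indepFun hik).integral_mul_eq_mul_integral (hZm i).aestronglyMeasurable
        (hZm k).aestronglyMeasurable
      have egoal : (fun ω => X i ω l * X k ω l' * (X j ω l * X j ω l'))
          = (Z i * Z k * Z j) := by
        funext ω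
        simp only [Pi.mul_apply, hZi, hZk, hZj]
      calc (∫ ω, X i ω l * X k ω l' * (X j ω l * X j ω l') ∂μ)
          = ∫ ω, (Z i * Z k * Z j) ω ∂μ := by rw [egoal]
        _ = (∫ ω, (Z i * Z k) ω ∂μ) * ∫ ω, Z j ω ∂μ := e1
        _ = (∫ ω, Z i ω ∂μ) * (∫ ω, Z k ω ∂μ) * ∫ ω, Z j ω ∂μ := by rw [e2]
        _ = μv l * μv l' * a := by
            rw [show (∫ ω, Z i ω ∂μ) = μv l from by rw [hZi]; exact hmean i l,
              show (∫ ω, Z k ω ∂μ) = μv l' from by rw [hZk]; exact hmean k l',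
              show (∫ ω, Z j ω ∂μ) = a from by rw [hZj]; exact ha j]
    -- quadruple term
    have T4 : ∀ i j k m : Fin n, i ≠ j → i ≠ k → i ≠ m → j ≠ k → j ≠ m → k ≠ m →
        (∫ ω, X i ω l * X j ω l' * X k ω l * X m ω l' ∂μ)
          = (μv l * μv l') * (μv l * μv l') := by
      intro i j k m hij hik him hjk hjm hkm
      set g : Fin n → (Fin p → ℝ) → ℝ := fun i' =>
        if i' = i ∨ i' = k then (fun v => v l) else (fun v => v l') with hgdef
      have hgm : ∀ i', Measurable (g i') := by
        intro i'
        simp only [hgdef]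
        split_ifs
        · exact measurable_pi_apply l
        · exact measurable_pi_apply l'
      set Z : Fin n → Ω → ℝ := fun i' => (g i') ∘ (X i') with hZdef
      have hZind : iIndepFun Z μ := hindep.comp g hgm
      have hZm : ∀ i', Measurable (Z i') := fun i' => (hgm i').comp (hmeas i')
      have hZi : Z i = fun ω => X i ω l := by
        funext ω; simp [hZdef, hgdef]
      have hZk : Z k = fun ω => X k ω l := by
        funext ω; simp [hZdef, hgdef]
      have hZj : Z j = fun ω => X j ω l' := by
        funext ω; simp [hZdef, hgdef, Ne.symm hij, hjk]
      have hZmm : Z m = fun ω => X m ω l' := by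
        funext ω; simp [hZdef, hgdef, Ne.symm him, Ne.symm hkm]
      have hInd1 : IndepFun (Z i * Z j) (Z k * Z m) μ :=
        hZind.indepFun_mul_mul hZm i j k m hik him hjk hjm
      have e1 := hInd1.integral_mul_eq_mul_integral ((hZm i).mul (hZm j)).aestronglyMeasurable
        ((hZm k).mul (hZm m)).aestronglyMeasurable
      have e2 := (hZind.indepFun hij).integral_mul_eq_mul_integral (hZm i).aestronglyMeasurable
        (hZm j).aestronglyMeasurable
      have e3 := (hZind.indepFun hkm).integral_mul_eq_mul_integral (hZm k).aestronglyMeasurable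
        (hZm m).aestronglyMeasurable
      have egoal : (fun ω => X i ω l * X j ω l' * X k ω l * X m ω l')
          = ((Z i * Z j) * (Z k * Z m)) := by
        funext ω
        simp only [Pi.mul_apply, hZi, hZk, hZj, hZmm]
        ring
      calc (∫ ω, X i ω l * X j ω l' * X k ω l * X m ω l' ∂μ)
          = ∫ ω, ((Z i * Z j) * (Z k * Z m)) ω ∂μ := by rw [egoal]
        _ = (∫ ω, (Z i * Z j) ω ∂μ) * ∫ ω, (Z k * Z m) ω ∂μ := e1
        _ = ((∫ ω, Z i ω ∂μ) * ∫ ω, Z j ω ∂μ) * ((∫ ω, Z k ω ∂μ) * ∫ ω, Z m ω ∂μ) := by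
            rw [e2, e3]
        _ = (μv l * μv l') * (μv l * μv l') := by
            rw [show (∫ ω, Z i ω ∂μ) = μv l from by rw [hZi]; exact hmean i l,
              show (∫ ω, Z k ω ∂μ) = μv l from by rw [hZk]; exact hmean k l,
              show (∫ ω, Z j ω ∂μ) = μv l' from by rw [hZj]; exact hmean j l',
              show (∫ ω, Z m ω ∂μ) = μv l' from by rw [hZmm]; exact hmean m l']
    -- integrals of the big sums
    have hF2 : (∫ ω, (∑ i : Fin n, ∑ j : Fin n,
        if i ≠ j then (X i ω l * X i ω l') * (X j ω l * X j ω l') else 0) ∂μ)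
        = Pfall n 2 * (a * a) := by
      rw [integral_finset_sum _ (fun i _ => integrable_finset_sum _ (fun j _ => by
        by_cases h : i ≠ j
        · simpa only [if_pos h] using hint2 l l' i j
        · simp only [if_neg h]; exact integrable_const 0))]
      rw [← count2 (a * a)]
      refine Finset.sum_congr rfl fun i _ => ?_
      rw [integral_finset_sum _ (fun j _ => by
        by_cases h : i ≠ j
        · simpa only [if_pos h] using hint2 l l' i j
        · simp only [if_neg h]; exact integrable_const 0)]
      refine Finset.sum_congr rfl fun j _ => ?_
      by_cases h : i ≠ j
      · simp only [if_pos h]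
        exact T2 i j h
      · simp only [if_neg h, integral_zero]
    have hF3 : (∫ ω, (∑ i : Fin n, ∑ j : Fin n, ∑ k : Fin n,
        if i ≠ j ∧ i ≠ k ∧ j ≠ k then X i ω l * X k ω l' * (X j ω l * X j ω l') else 0) ∂μ)
        = Pfall n 3 * (μv l * μv l' * a) := by
      rw [integral_finset_sum _ (fun i _ => integrable_finset_sum _ (fun j _ =>
        integrable_finset_sum _ (fun k _ => by
          by_cases h : i ≠ j ∧ i ≠ k ∧ j ≠ k
          · simpa only [if_pos h] using hint3 l l' i j k
          · simp only [if_neg h]; exact integrable_const 0)))]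
      rw [← count3 (μv l * μv l' * a)]
      refine Finset.sum_congr rfl fun i _ => ?_
      rw [integral_finset_sum _ (fun j _ => integrable_finset_sum _ (fun k _ => by
          by_cases h : i ≠ j ∧ i ≠ k ∧ j ≠ k
          · simpa only [if_pos h] using hint3 l l' i j k
          · simp only [if_neg h]; exact integrable_const 0))]
      refine Finset.sum_congr rfl fun j _ => ?_
      rw [integral_finset_sum _ (fun k _ => by
          by_cases h : i ≠ j ∧ i ≠ k ∧ j ≠ k
          · simpa only [if_pos h] using hint3 l l' i j k
          · simp only [if_neg h]; exact integrable_const 0)]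
      refine Finset.sum_congr rfl fun k _ => ?_
      by_cases h : i ≠ j ∧ i ≠ k ∧ j ≠ k
      · simp only [if_pos h]
        exact T3 i j k h.1 h.2.1 h.2.2
      · simp only [if_neg h, integral_zero]
    have hF4 : (∫ ω, (∑ i : Fin n, ∑ j : Fin n, ∑ k : Fin n, ∑ m : Fin n,
        if i ≠ j ∧ i ≠ k ∧ i ≠ m ∧ j ≠ k ∧ j ≠ m ∧ k ≠ m then
          X i ω l * X j ω l' * X k ω l * X m ω l' else 0) ∂μ)
        = Pfall n 4 * ((μv l * μv l') * (μv l * μv l')) := by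
      have hIok : ∀ (i j k m : Fin n), Integrable (fun ω =>
          if i ≠ j ∧ i ≠ k ∧ i ≠ m ∧ j ≠ k ∧ j ≠ m ∧ k ≠ m then
            X i ω l * X j ω l' * X k ω l * X m ω l' else 0) μ := by
        intro i j k m
        by_cases h : i ≠ j ∧ i ≠ k ∧ i ≠ m ∧ j ≠ k ∧ j ≠ m ∧ k ≠ m
        · simpa only [if_pos h] using hint4 l l' i j k m
        · simp only [if_neg h]; exact integrable_const 0
      rw [integral_finset_sum _ (fun i _ => integrable_finset_sum _ (fun j _ =>
        integrable_finset_sum _ (fun k _ => integrable_finset_sum _ (fun m _ => hIok i j k m))))]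
      rw [← count4 ((μv l * μv l') * (μv l * μv l'))]
      refine Finset.sum_congr rfl fun i _ => ?_
      rw [integral_finset_sum _ (fun j _ => integrable_finset_sum _ (fun k _ =>
        integrable_finset_sum _ (fun m _ => hIok i j k m)))]
      refine Finset.sum_congr rfl fun j _ => ?_
      rw [integral_finset_sum _ (fun k _ => integrable_finset_sum _ (fun m _ => hIok i j k m))]
      refine Finset.sum_congr rfl fun k _ => ?_
      rw [integral_finset_sum _ (fun m _ => hIok i j k m)]
      refine Finset.sum_congr rfl fun m _ => ?_
      by_cases h : i ≠ j ∧ i ≠ k ∧ i ≠ m ∧ j ≠ k ∧ j ≠ m ∧ k ≠ m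
      · simp only [if_pos h]
        exact T4 i j k m h.1 h.2.1 h.2.2.1 h.2.2.2.1 h.2.2.2.2.1 h.2.2.2.2.2
      · simp only [if_neg h, integral_zero]
    -- assemble
    have IG1 : Integrable (fun ω =>
        (Pfall n 2)⁻¹ * (∑ i : Fin n, ∑ j : Fin n,
            if i ≠ j then (X i ω l * X i ω l') * (X j ω l * X j ω l') else 0)
          - 2 * (Pfall n 3)⁻¹ * (∑ i : Fin n, ∑ j : Fin n, ∑ k : Fin n,
            if i ≠ j ∧ i ≠ k ∧ j ≠ k then X i ω l * X k ω l' * (X j ω l * X j ω l') else 0)) μ :=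
      ((hintF2 l l').const_mul _).sub ((hintF3 l l').const_mul _)
    rw [integral_add IG1 ((hintF4 l l').const_mul _),
      integral_sub ((hintF2 l l').const_mul _) ((hintF3 l l').const_mul _),
      integral_const_mul, integral_const_mul, integral_const_mul, hF2, hF3, hF4]
    have h2 : Pfall n 2 ≠ 0 := ne_of_gt (Pfall_pos (by omega))
    have h3 : Pfall n 3 ≠ 0 := ne_of_gt (Pfall_pos (by omega))
    have h4 : Pfall n 4 ≠ 0 := ne_of_gt (Pfall_pos hn)
    rw [hcovS]
    field_simp
    ring
  -- final assembly
  simp only [Dhat, Dq]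
  rw [integral_finset_sum _ (fun l _ => integrable_finset_sum _ (fun l' _ => by
    by_cases hc : (l' : ℕ) = (l : ℕ) + q
    · simpa only [if_pos hc] using hintG l l'
    · simp only [if_neg hc]; exact integrable_const 0))]
  refine Finset.sum_congr rfl fun l _ => ?_
  rw [integral_finset_sum _ (fun l' _ => by
    by_cases hc : (l' : ℕ) = (l : ℕ) + q
    · simpa only [if_pos hc] using hintG l l'
    · simp only [if_neg hc]; exact integrable_const 0)]
  refine Finset.sum_congr rfl fun l' _ => ?_
  by_cases hc : (l' : ℕ) = (l : ℕ) + q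
  · simp only [if_pos hc]
    exact key l l'
  · simp only [if_neg hc, integral_zero]
end
end

section
/- The statistic D̂_{nq} is invariant under location shifts: for any fixed vectors x_1,…,x_n ∈ ℝ^p (n ≥ 4), any c ∈ ℝ^p and any q ∈ {0,…,p−1}, the value of D̂_{nq} computed from the shifted data x_1 + c,…,x_n + c equals the value of D̂_{nq} computed from x_1,…,x_n. Consequently W_{nk} = 2 Σ_{q=k+1}^{p−1} D̂_{nq} is also location-shift invariant. -/
open Matrix

noncomputable section

/-- The statistic `W_{nk} = 2 ∑_{q=k+1}^{p-1} D̂_{nq}`. -/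
def Wstat (n p k : ℕ) (x : Fin n → Fin p → ℝ) : ℝ :=
  2 * ∑ q ∈ Finset.Icc (k + 1) (p - 1), Dhat n p q x



namespace DhatAux

variable {n : ℕ}
lemma sum_ite_ne1 (f : Fin n → ℝ) (i : Fin n) :
    ∑ j, (if i ≠ j then f j else 0) = (∑ j, f j) - f i := by
  have h : ∀ j, (if i ≠ j then f j else 0) = f j - (if i = j then f j else 0) := by
    intro j; by_cases h : i = j <;> simp [h]
  simp_rw [h]
  rw [Finset.sum_sub_distrib, Finset.sum_ite_eq, if_pos (Finset.mem_univ i)]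

lemma sum_ite_ne2 (f : Fin n → ℝ) (i j : Fin n) (hij : i ≠ j) :
    ∑ k, (if i ≠ k ∧ j ≠ k then f k else 0) = (∑ k, f k) - f i - f j := by
  have h : ∀ k, (if i ≠ k ∧ j ≠ k then f k else 0)
      = f k - (if i = k then f k else 0) - (if j = k then f k else 0) := by
    intro k
    by_cases h1 : i = k
    · by_cases h2 : j = k
      · exact absurd (h1.trans h2.symm) hij
      · simp [h1, h2]
    · by_cases h2 : j = k <;> simp [h1, h2]
  simp_rw [h]
  rw [Finset.sum_sub_distrib, Finset.sum_sub_distrib, Finset.sum_ite_eq,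
    Finset.sum_ite_eq, if_pos (Finset.mem_univ i), if_pos (Finset.mem_univ j)]

lemma sum_ite_ne3 (f : Fin n → ℝ) (i j k : Fin n) (hij : i ≠ j) (hik : i ≠ k) (hjk : j ≠ k) :
    ∑ m, (if i ≠ m ∧ j ≠ m ∧ k ≠ m then f m else 0) = (∑ m, f m) - f i - f j - f k := by
  have h : ∀ m, (if i ≠ m ∧ j ≠ m ∧ k ≠ m then f m else 0)
      = f m - (if i = m then f m else 0) - (if j = m then f m else 0)
          - (if k = m then f m else 0) := by
    intro m
    by_cases h1 : i = m
    · by_cases h2 : j = m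
      · exact absurd (h1.trans h2.symm) hij
      · by_cases h3 : k = m
        · exact absurd (h1.trans h3.symm) hik
        · simp [h1, h2, h3]
    · by_cases h2 : j = m
      · by_cases h3 : k = m
        · exact absurd (h2.trans h3.symm) hjk
        · simp [h1, h2, h3]
      · by_cases h3 : k = m <;> simp [h1, h2, h3]
  simp_rw [h]
  rw [Finset.sum_sub_distrib, Finset.sum_sub_distrib, Finset.sum_sub_distrib,
    Finset.sum_ite_eq, Finset.sum_ite_eq, Finset.sum_ite_eq,
    if_pos (Finset.mem_univ i), if_pos (Finset.mem_univ j), if_pos (Finset.mem_univ k)]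

lemma pair_sum (F G : Fin n → ℝ) :
    ∑ i, ∑ j, (if i ≠ j then F i * G j else 0)
      = (∑ i, F i) * (∑ i, G i) - ∑ i, F i * G i := by
  have h : ∀ i, ∑ j, (if i ≠ j then F i * G j else 0)
      = F i * (∑ j, G j) - F i * G i := by
    intro i
    have h1 : ∀ j, (if i ≠ j then F i * G j else 0) = F i * (if i ≠ j then G j else 0) := by
      intro j; split <;> simp
    simp_rw [h1, ← Finset.mul_sum, sum_ite_ne1, mul_sub]
  simp_rw [h, Finset.sum_sub_distrib, ← Finset.sum_mul]

lemma triple_sum (F G H : Fin n → ℝ) :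
    ∑ i, ∑ j, ∑ k, (if i ≠ j ∧ i ≠ k ∧ j ≠ k then F i * G j * H k else 0)
      = (∑ i, F i) * (∑ i, G i) * (∑ i, H i)
        - (∑ i, F i * G i) * (∑ i, H i)
        - (∑ i, F i * H i) * (∑ i, G i)
        - (∑ i, G i * H i) * (∑ i, F i)
        + 2 * ∑ i, F i * G i * H i := by
  have h : ∀ i j, ∑ k, (if i ≠ j ∧ i ≠ k ∧ j ≠ k then F i * G j * H k else 0)
      = (if i ≠ j then F i * (G j * (∑ k, H k)) else 0)
        - (if i ≠ j then (F i * H i) * G j else 0)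
        - (if i ≠ j then F i * (G j * H j) else 0) := by
    intro i j
    by_cases hij : i = j
    · simp [hij]
    · have h1 : ∀ k, (if i ≠ j ∧ i ≠ k ∧ j ≠ k then F i * G j * H k else 0)
          = F i * G j * (if i ≠ k ∧ j ≠ k then H k else 0) := by
        intro k
        by_cases hk : i ≠ k ∧ j ≠ k
        · rw [if_pos ⟨hij, hk.1, hk.2⟩, if_pos hk]
        · rw [if_neg (fun hc => hk ⟨hc.2.1, hc.2.2⟩), if_neg hk, mul_zero]
      simp_rw [h1, ← Finset.mul_sum, sum_ite_ne2 H i j hij, if_pos hij]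
      ring
  simp_rw [h, Finset.sum_sub_distrib]
  rw [pair_sum F (fun j => G j * (∑ k, H k)), pair_sum (fun i => F i * H i) G,
    pair_sum F (fun j => G j * H j)]
  have e1 : ∑ i, G i * (∑ k, H k) = (∑ i, G i) * (∑ k, H k) := by
    rw [Finset.sum_mul]
  have e2 : ∑ i, F i * (G i * (∑ k, H k)) = (∑ i, F i * G i) * (∑ k, H k) := by
    rw [Finset.sum_mul]; exact Finset.sum_congr rfl fun i _ => by ring
  have e3 : ∑ i, F i * H i * G i = ∑ i, F i * G i * H i :=
    Finset.sum_congr rfl fun i _ => by ring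
  have e4 : ∑ i, F i * (G i * H i) = ∑ i, F i * G i * H i :=
    Finset.sum_congr rfl fun i _ => by ring
  rw [e1, e2, e3, e4]
  ring

lemma quad_sum (F G H K : Fin n → ℝ) :
    ∑ i, ∑ j, ∑ k, ∑ m,
        (if i ≠ j ∧ i ≠ k ∧ i ≠ m ∧ j ≠ k ∧ j ≠ m ∧ k ≠ m then F i * G j * H k * K m else 0)
      = (∑ i, F i) * (∑ i, G i) * (∑ i, H i) * (∑ i, K i)
        - (∑ i, F i * G i) * (∑ i, H i) * (∑ i, K i)
        - (∑ i, F i * H i) * (∑ i, G i) * (∑ i, K i)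
        - (∑ i, F i * K i) * (∑ i, G i) * (∑ i, H i)
        - (∑ i, G i * H i) * (∑ i, F i) * (∑ i, K i)
        - (∑ i, G i * K i) * (∑ i, F i) * (∑ i, H i)
        - (∑ i, H i * K i) * (∑ i, F i) * (∑ i, G i)
        + (∑ i, F i * G i) * (∑ i, H i * K i)
        + (∑ i, F i * H i) * (∑ i, G i * K i)
        + (∑ i, F i * K i) * (∑ i, G i * H i)
        + 2 * ((∑ i, F i * G i * H i) * (∑ i, K i))
        + 2 * ((∑ i, F i * G i * K i) * (∑ i, H i))
        + 2 * ((∑ i, F i * H i * K i) * (∑ i, G i))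
        + 2 * ((∑ i, G i * H i * K i) * (∑ i, F i))
        - 6 * ∑ i, F i * G i * H i * K i := by
  have h : ∀ i j k, ∑ m,
        (if i ≠ j ∧ i ≠ k ∧ i ≠ m ∧ j ≠ k ∧ j ≠ m ∧ k ≠ m then F i * G j * H k * K m else 0)
      = (if i ≠ j ∧ i ≠ k ∧ j ≠ k then F i * G j * (H k * (∑ m, K m)) else 0)
        - (if i ≠ j ∧ i ≠ k ∧ j ≠ k then (F i * K i) * G j * H k else 0)
        - (if i ≠ j ∧ i ≠ k ∧ j ≠ k then F i * (G j * K j) * H k else 0)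
        - (if i ≠ j ∧ i ≠ k ∧ j ≠ k then F i * G j * (H k * K k) else 0) := by
    intro i j k
    by_cases h3 : i ≠ j ∧ i ≠ k ∧ j ≠ k
    · have h1 : ∀ m,
          (if i ≠ j ∧ i ≠ k ∧ i ≠ m ∧ j ≠ k ∧ j ≠ m ∧ k ≠ m then F i * G j * H k * K m else 0)
          = F i * G j * H k * (if i ≠ m ∧ j ≠ m ∧ k ≠ m then K m else 0) := by
        intro m
        by_cases hm : i ≠ m ∧ j ≠ m ∧ k ≠ m
        · rw [if_pos ⟨h3.1, h3.2.1, hm.1, h3.2.2, hm.2.1, hm.2.2⟩, if_pos hm]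
        · rw [if_neg (fun hc => hm ⟨hc.2.2.1, hc.2.2.2.2.1, hc.2.2.2.2.2⟩), if_neg hm, mul_zero]
      simp_rw [h1, ← Finset.mul_sum, sum_ite_ne3 K i j k h3.1 h3.2.1 h3.2.2, if_pos h3]
      ring
    · have h1 : ∀ m,
          (if i ≠ j ∧ i ≠ k ∧ i ≠ m ∧ j ≠ k ∧ j ≠ m ∧ k ≠ m then F i * G j * H k * K m else 0)
          = 0 := fun m => if_neg (fun hc => h3 ⟨hc.1, hc.2.1, hc.2.2.2.1⟩)
      simp [h1, if_neg h3]
  simp_rw [h, Finset.sum_sub_distrib]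
  rw [triple_sum F G (fun k => H k * (∑ m, K m)), triple_sum (fun i => F i * K i) G H,
    triple_sum F (fun j => G j * K j) H, triple_sum F G (fun k => H k * K k)]
  have e1 : ∑ i, H i * (∑ m, K m) = (∑ i, H i) * (∑ i, K i) := by rw [Finset.sum_mul]
  have e2 : ∑ i, F i * (H i * (∑ m, K m)) = (∑ i, F i * H i) * (∑ i, K i) := by
    rw [Finset.sum_mul]; exact Finset.sum_congr rfl fun i _ => by ring
  have e3 : ∑ i, G i * (H i * (∑ m, K m)) = (∑ i, G i * H i) * (∑ i, K i) := by
    rw [Finset.sum_mul]; exact Finset.sum_congr rfl fun i _ => by ring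
  have e4 : ∑ i, F i * G i * (H i * (∑ m, K m)) = (∑ i, F i * G i * H i) * (∑ i, K i) := by
    rw [Finset.sum_mul]; exact Finset.sum_congr rfl fun i _ => by ring
  have e5 : ∑ i, F i * K i * G i = ∑ i, F i * G i * K i :=
    Finset.sum_congr rfl fun i _ => by ring
  have e6 : ∑ i, F i * K i * H i = ∑ i, F i * H i * K i :=
    Finset.sum_congr rfl fun i _ => by ring
  have e7 : ∑ i, F i * K i * G i * H i = ∑ i, F i * G i * H i * K i :=
    Finset.sum_congr rfl fun i _ => by ring
  have e8 : ∑ i, F i * (G i * K i) = ∑ i, F i * G i * K i :=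
    Finset.sum_congr rfl fun i _ => by ring
  have e9 : ∑ i, G i * K i * H i = ∑ i, G i * H i * K i :=
    Finset.sum_congr rfl fun i _ => by ring
  have e10 : ∑ i, F i * (G i * K i) * H i = ∑ i, F i * G i * H i * K i :=
    Finset.sum_congr rfl fun i _ => by ring
  have e11 : ∑ i, F i * (H i * K i) = ∑ i, F i * H i * K i :=
    Finset.sum_congr rfl fun i _ => by ring
  have e12 : ∑ i, G i * (H i * K i) = ∑ i, G i * H i * K i :=
    Finset.sum_congr rfl fun i _ => by ring
  have e13 : ∑ i, F i * G i * (H i * K i) = ∑ i, F i * G i * H i * K i :=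
    Finset.sum_congr rfl fun i _ => by ring
  rw [e1, e2, e3, e4, e5, e6, e7, e8, e9, e10, e11, e12, e13]
  ring

lemma T2eq (a b : Fin n → ℝ) :
    ∑ i, ∑ j, (if i ≠ j then (a i * b i) * (a j * b j) else 0)
      = (∑ i, a i * b i) * (∑ i, a i * b i) - ∑ i, a i * a i * b i * b i := by
  rw [pair_sum (fun i => a i * b i) (fun i => a i * b i)]
  congr 1
  exact Finset.sum_congr rfl fun i _ => by ring

lemma T3eq (a b : Fin n → ℝ) :
    ∑ i, ∑ j, ∑ k, (if i ≠ j ∧ i ≠ k ∧ j ≠ k then a i * b k * (a j * b j) else 0)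
      = (∑ i, a i) * (∑ i, a i * b i) * (∑ i, b i)
        - (∑ i, a i * a i * b i) * (∑ i, b i)
        - (∑ i, a i * b i) * (∑ i, a i * b i)
        - (∑ i, a i * b i * b i) * (∑ i, a i)
        + 2 * ∑ i, a i * a i * b i * b i := by
  have hc : ∀ i j k : Fin n, (if i ≠ j ∧ i ≠ k ∧ j ≠ k then a i * b k * (a j * b j) else 0)
      = (if i ≠ j ∧ i ≠ k ∧ j ≠ k then a i * (a j * b j) * b k else 0) := by
    intro i j k; split
    · ring
    · rfl
  simp_rw [hc]
  rw [triple_sum a (fun j => a j * b j) b]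
  have e1 : ∑ i, a i * (a i * b i) = ∑ i, a i * a i * b i :=
    Finset.sum_congr rfl fun i _ => by ring
  have e3 : ∑ i, a i * (a i * b i) * b i = ∑ i, a i * a i * b i * b i :=
    Finset.sum_congr rfl fun i _ => by ring
  rw [e1, e3]

lemma T4eq (a b : Fin n → ℝ) :
    ∑ i, ∑ j, ∑ k, ∑ m,
        (if i ≠ j ∧ i ≠ k ∧ i ≠ m ∧ j ≠ k ∧ j ≠ m ∧ k ≠ m then a i * b j * a k * b m else 0)
      = (∑ i, a i) * (∑ i, a i) * (∑ i, b i) * (∑ i, b i)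
        - 4 * ((∑ i, a i * b i) * (∑ i, a i) * (∑ i, b i))
        - (∑ i, a i * a i) * ((∑ i, b i) * (∑ i, b i))
        - (∑ i, b i * b i) * ((∑ i, a i) * (∑ i, a i))
        + 2 * ((∑ i, a i * b i) * (∑ i, a i * b i))
        + (∑ i, a i * a i) * (∑ i, b i * b i)
        + 4 * ((∑ i, a i * a i * b i) * (∑ i, b i))
        + 4 * ((∑ i, a i * b i * b i) * (∑ i, a i))
        - 6 * ∑ i, a i * a i * b i * b i := by
  rw [quad_sum a b a b]
  have e1 : ∑ i, b i * a i = ∑ i, a i * b i := Finset.sum_congr rfl fun i _ => by ring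
  have e2 : ∑ i, a i * b i * a i = ∑ i, a i * a i * b i :=
    Finset.sum_congr rfl fun i _ => by ring
  have e3 : ∑ i, b i * a i * b i = ∑ i, a i * b i * b i :=
    Finset.sum_congr rfl fun i _ => by ring
  have e4 : ∑ i, a i * b i * a i * b i = ∑ i, a i * a i * b i * b i :=
    Finset.sum_congr rfl fun i _ => by ring
  rw [e1, e2, e3, e4]
  ring

lemma key (n : ℕ) (hn : 4 ≤ n) (a b : Fin n → ℝ) (ca cb : ℝ) :
    (Pfall n 2)⁻¹ *
          (∑ i : Fin n, ∑ j : Fin n,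
            if i ≠ j then ((a i + ca) * (b i + cb)) * ((a j + ca) * (b j + cb)) else 0)
        - 2 * (Pfall n 3)⁻¹ *
          (∑ i : Fin n, ∑ j : Fin n, ∑ k : Fin n,
            if i ≠ j ∧ i ≠ k ∧ j ≠ k then
              (a i + ca) * (b k + cb) * ((a j + ca) * (b j + cb)) else 0)
        + (Pfall n 4)⁻¹ *
          (∑ i : Fin n, ∑ j : Fin n, ∑ k : Fin n, ∑ m : Fin n,
            if i ≠ j ∧ i ≠ k ∧ i ≠ m ∧ j ≠ k ∧ j ≠ m ∧ k ≠ m then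
              (a i + ca) * (b j + cb) * (a k + ca) * (b m + cb) else 0)
    = (Pfall n 2)⁻¹ *
          (∑ i : Fin n, ∑ j : Fin n,
            if i ≠ j then (a i * b i) * (a j * b j) else 0)
        - 2 * (Pfall n 3)⁻¹ *
          (∑ i : Fin n, ∑ j : Fin n, ∑ k : Fin n,
            if i ≠ j ∧ i ≠ k ∧ j ≠ k then a i * b k * (a j * b j) else 0)
        + (Pfall n 4)⁻¹ *
          (∑ i : Fin n, ∑ j : Fin n, ∑ k : Fin n, ∑ m : Fin n,
            if i ≠ j ∧ i ≠ k ∧ i ≠ m ∧ j ≠ k ∧ j ≠ m ∧ k ≠ m then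
              a i * b j * a k * b m else 0) := by
  rw [T2eq a b, T3eq a b, T4eq a b,
    T2eq (fun i => a i + ca) (fun i => b i + cb),
    T3eq (fun i => a i + ca) (fun i => b i + cb),
    T4eq (fun i => a i + ca) (fun i => b i + cb)]
  have hS : ∑ i : Fin n, (a i + ca) = (∑ i, a i) + (n : ℝ) * ca := by
    rw [Finset.sum_add_distrib, Finset.sum_const, Finset.card_univ, Fintype.card_fin,
      nsmul_eq_mul]
  have hSb : ∑ i : Fin n, (b i + cb) = (∑ i, b i) + (n : ℝ) * cb := by
    rw [Finset.sum_add_distrib, Finset.sum_const, Finset.card_univ, Fintype.card_fin,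
      nsmul_eq_mul]
  have hSab : ∑ i : Fin n, (a i + ca) * (b i + cb)
      = (∑ i, a i * b i) + ca * (∑ i, b i) + cb * (∑ i, a i) + (n : ℝ) * (ca * cb) := by
    simp_rw [show ∀ i : Fin n, (a i + ca) * (b i + cb)
        = a i * b i + ca * b i + cb * a i + ca * cb from fun i => by ring,
      Finset.sum_add_distrib, ← Finset.mul_sum, Finset.sum_const, Finset.card_univ,
      Fintype.card_fin, nsmul_eq_mul]
    ring
  have hSa2 : ∑ i : Fin n, (a i + ca) * (a i + ca)
      = (∑ i, a i * a i) + 2 * ca * (∑ i, a i) + (n : ℝ) * (ca * ca) := by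
    simp_rw [show ∀ i : Fin n, (a i + ca) * (a i + ca)
        = a i * a i + 2 * ca * a i + ca * ca from fun i => by ring,
      Finset.sum_add_distrib, ← Finset.mul_sum, Finset.sum_const, Finset.card_univ,
      Fintype.card_fin, nsmul_eq_mul]
    ring
  have hSb2 : ∑ i : Fin n, (b i + cb) * (b i + cb)
      = (∑ i, b i * b i) + 2 * cb * (∑ i, b i) + (n : ℝ) * (cb * cb) := by
    simp_rw [show ∀ i : Fin n, (b i + cb) * (b i + cb)
        = b i * b i + 2 * cb * b i + cb * cb from fun i => by ring,
      Finset.sum_add_distrib, ← Finset.mul_sum, Finset.sum_const, Finset.card_univ,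
      Fintype.card_fin, nsmul_eq_mul]
    ring
  have hSa2b : ∑ i : Fin n, (a i + ca) * (a i + ca) * (b i + cb)
      = (∑ i, a i * a i * b i) + cb * (∑ i, a i * a i) + 2 * ca * (∑ i, a i * b i)
        + 2 * (ca * cb) * (∑ i, a i) + ca * ca * (∑ i, b i) + (n : ℝ) * (ca * ca * cb) := by
    simp_rw [show ∀ i : Fin n, (a i + ca) * (a i + ca) * (b i + cb)
        = a i * a i * b i + cb * (a i * a i) + 2 * ca * (a i * b i)
          + 2 * (ca * cb) * a i + ca * ca * b i + ca * ca * cb from fun i => by ring,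
      Finset.sum_add_distrib, ← Finset.mul_sum, Finset.sum_const, Finset.card_univ,
      Fintype.card_fin, nsmul_eq_mul]
    ring
  have hSab2 : ∑ i : Fin n, (a i + ca) * (b i + cb) * (b i + cb)
      = (∑ i, a i * b i * b i) + ca * (∑ i, b i * b i) + 2 * cb * (∑ i, a i * b i)
        + 2 * (ca * cb) * (∑ i, b i) + cb * cb * (∑ i, a i) + (n : ℝ) * (ca * cb * cb) := by
    simp_rw [show ∀ i : Fin n, (a i + ca) * (b i + cb) * (b i + cb)
        = a i * b i * b i + ca * (b i * b i) + 2 * cb * (a i * b i)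
          + 2 * (ca * cb) * b i + cb * cb * a i + ca * cb * cb from fun i => by ring,
      Finset.sum_add_distrib, ← Finset.mul_sum, Finset.sum_const, Finset.card_univ,
      Fintype.card_fin, nsmul_eq_mul]
    ring
  have hSa2b2 : ∑ i : Fin n, (a i + ca) * (a i + ca) * (b i + cb) * (b i + cb)
      = (∑ i, a i * a i * b i * b i) + 2 * cb * (∑ i, a i * a i * b i)
        + 2 * ca * (∑ i, a i * b i * b i) + cb * cb * (∑ i, a i * a i)
        + ca * ca * (∑ i, b i * b i) + 4 * (ca * cb) * (∑ i, a i * b i)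
        + 2 * (ca * cb * cb) * (∑ i, a i) + 2 * (ca * ca * cb) * (∑ i, b i)
        + (n : ℝ) * (ca * ca * cb * cb) := by
    simp_rw [show ∀ i : Fin n, (a i + ca) * (a i + ca) * (b i + cb) * (b i + cb)
        = a i * a i * b i * b i + 2 * cb * (a i * a i * b i) + 2 * ca * (a i * b i * b i)
          + cb * cb * (a i * a i) + ca * ca * (b i * b i) + 4 * (ca * cb) * (a i * b i)
          + 2 * (ca * cb * cb) * a i + 2 * (ca * ca * cb) * b i
          + ca * ca * cb * cb from fun i => by ring,
      Finset.sum_add_distrib, ← Finset.mul_sum, Finset.sum_const, Finset.card_univ,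
      Fintype.card_fin, nsmul_eq_mul]
    ring
  rw [hS, hSb, hSab, hSa2, hSb2, hSa2b, hSab2, hSa2b2]
  have hn4 : (4 : ℝ) ≤ (n : ℝ) := by exact_mod_cast hn
  have h0 : (n : ℝ) ≠ 0 := by linarith
  have h1 : (n : ℝ) - 1 ≠ 0 := by intro h; nlinarith [h]
  have h2 : (n : ℝ) - 2 ≠ 0 := by intro h; nlinarith [h]
  have h3 : (n : ℝ) - 3 ≠ 0 := by intro h; nlinarith [h]
  have p2 : Pfall n 2 = (n : ℝ) * ((n : ℝ) - 1) := by
    simp [Pfall, Finset.prod_range_succ]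
  have p3 : Pfall n 3 = (n : ℝ) * ((n : ℝ) - 1) * ((n : ℝ) - 2) := by
    simp [Pfall, Finset.prod_range_succ]
  have p4 : Pfall n 4 = (n : ℝ) * ((n : ℝ) - 1) * ((n : ℝ) - 2) * ((n : ℝ) - 3) := by
    simp [Pfall, Finset.prod_range_succ]
  rw [p2, p3, p4]
  field_simp
  ring

end DhatAux

/-- Location-shift invariance of `D̂_{nq}` and hence of `W_{nk}`. -/
theorem Dhat_location_invariant (n p : ℕ) (hn : 4 ≤ n)
    (x : Fin n → Fin p → ℝ) (c : Fin p → ℝ) (q : ℕ) (hq : q ≤ p - 1) :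
    Dhat n p q (fun i l => x i l + c l) = Dhat n p q x
    ∧ ∀ k : ℕ, Wstat n p k (fun i l => x i l + c l) = Wstat n p k x := by
  have main : ∀ q' : ℕ, Dhat n p q' (fun i l => x i l + c l) = Dhat n p q' x := by
    intro q'
    unfold Dhat
    refine Finset.sum_congr rfl fun l _ => Finset.sum_congr rfl fun l' _ => ?_
    by_cases hll : (l' : ℕ) = (l : ℕ) + q'
    · rw [if_pos hll, if_pos hll]
      exact DhatAux.key n hn (fun i => x i l) (fun i => x i l') (c l) (c l')
    · rw [if_neg hll, if_neg hll]
  refine ⟨main q, fun k => ?_⟩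
  unfold Wstat
  congr 1
  exact Finset.sum_congr rfl fun q' _ => main q'
end
end

section
/- Let Σ be a symmetric positive semidefinite p×p real matrix and k ∈ {0,…,p−1}. Then tr[{Σ(Σ − B_k(Σ))}²] ≤ 4(k+1)² tr(Σ⁴). -/
open Matrix

noncomputable section

/-- The banded version `B_k(S)` of a `p × p` matrix. -/
def bandMat {p : ℕ} (S : Matrix (Fin p) (Fin p) ℝ) (k : ℕ) : Matrix (Fin p) (Fin p) ℝ :=
  Matrix.of fun i j => if ((i : ℤ) - (j : ℤ)).natAbs ≤ k then S i j else 0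

attribute [local instance] Matrix.frobeniusSeminormedAddCommGroup

namespace BandAux

variable {p : ℕ}

lemma norm_sq_eq (A : Matrix (Fin p) (Fin p) ℝ) :
    ‖A‖ ^ 2 = ∑ i, ∑ j, (A i j) ^ 2 := by
  rw [Matrix.frobenius_norm_def, ← Real.rpow_natCast _ 2,
    ← Real.rpow_mul (by positivity)]
  norm_num

lemma trace_mul_eq (A B : Matrix (Fin p) (Fin p) ℝ) :
    Matrix.trace (A * B) = ∑ i, ∑ j, A i j * B j i := by
  simp [Matrix.trace, Matrix.diag, Matrix.mul_apply]

lemma trace_mul_transpose_eq (A : Matrix (Fin p) (Fin p) ℝ) :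
    Matrix.trace (A * Aᵀ) = ‖A‖ ^ 2 := by
  rw [trace_mul_eq, norm_sq_eq]
  simp [Matrix.transpose_apply, sq]

lemma trace_self_le (A : Matrix (Fin p) (Fin p) ℝ) :
    Matrix.trace (A * A) ≤ ‖A‖ ^ 2 := by
  rw [trace_mul_eq, norm_sq_eq]
  have h : ∑ i, ∑ j, A i j * A j i
      ≤ ∑ i, ∑ j, ((A i j) ^ 2 + (A j i) ^ 2) / 2 := by
    refine Finset.sum_le_sum fun i _ => Finset.sum_le_sum fun j _ => ?_
    nlinarith [sq_nonneg (A i j - A j i)]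
  have h2 : ∑ i, ∑ j, ((A j i):ℝ)^2 / 2 = ∑ i, ∑ j, ((A i j):ℝ)^2 / 2 :=
    Finset.sum_comm
  have h3 : ∑ i, ∑ j, (((A i j):ℝ) ^ 2 + (A j i) ^ 2) / 2
      = ∑ i, ∑ j, ((A i j):ℝ)^2/2 + ∑ i, ∑ j, ((A j i):ℝ)^2/2 := by
    simp [add_div, Finset.sum_add_distrib]
  have h4 : ∑ i, ∑ j, ((A i j):ℝ)^2/2 = (∑ i, ∑ j, ((A i j):ℝ)^2)/2 := by
    simp [Finset.sum_div]
  linarith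

lemma trace_mul_le (A B : Matrix (Fin p) (Fin p) ℝ) :
    Matrix.trace (A * B) ≤ ‖A‖ * ‖B‖ := by
  have hcs : (∑ x : Fin p × Fin p, A x.1 x.2 * B x.2 x.1) ^ 2
      ≤ (∑ x : Fin p × Fin p, (A x.1 x.2) ^ 2) * (∑ x : Fin p × Fin p, (B x.2 x.1) ^ 2) :=
    Finset.sum_mul_sq_le_sq_mul_sq _ _ _
  have hA : ∑ x : Fin p × Fin p, (A x.1 x.2) ^ 2 = ‖A‖ ^ 2 := by
    rw [norm_sq_eq]; exact Fintype.sum_prod_type (fun x : Fin p × Fin p => (A x.1 x.2)^2)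
  have hB : ∑ x : Fin p × Fin p, (B x.2 x.1) ^ 2 = ‖B‖ ^ 2 := by
    rw [norm_sq_eq]
    exact (Fintype.sum_prod_type (fun x : Fin p × Fin p => (B x.2 x.1)^2)).trans Finset.sum_comm
  have htr : Matrix.trace (A * B) = ∑ x : Fin p × Fin p, A x.1 x.2 * B x.2 x.1 := by
    rw [trace_mul_eq]
    exact (Fintype.sum_prod_type (fun x : Fin p × Fin p => A x.1 x.2 * B x.2 x.1)).symm
  rw [htr]
  rw [hA, hB] at hcs
  nlinarith [hcs, norm_nonneg A, norm_nonneg B,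
    mul_nonneg (norm_nonneg A) (norm_nonneg B)]

lemma norm_mul_sq_le (A B : Matrix (Fin p) (Fin p) ℝ) :
    ‖A * B‖ ^ 2 ≤ ‖Aᵀ * A‖ * ‖B * Bᵀ‖ := by
  have h : ‖A * B‖ ^ 2 = Matrix.trace ((Aᵀ * A) * (B * Bᵀ)) := by
    rw [← trace_mul_transpose_eq (A * B), Matrix.transpose_mul,
      ← Matrix.mul_assoc, Matrix.trace_mul_cycle]
    simp only [Matrix.mul_assoc]
  rw [h]
  exact trace_mul_le _ _

lemma le_of_sq_le' {a b : ℝ} (h : a ^ 2 ≤ b ^ 2) (hb : 0 ≤ b) : a ≤ b := by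
  nlinarith

def Fmat (S : Matrix (Fin p) (Fin p) ℝ) (d : ℤ) : Matrix (Fin p) (Fin p) ℝ :=
  Matrix.of fun i j => if (i : ℤ) - (j : ℤ) = d then S i j else 0

lemma Fmat_transpose {S : Matrix (Fin p) (Fin p) ℝ} (hsym : ∀ i j, S i j = S j i) (d : ℤ) :
    (Fmat S d)ᵀ = Fmat S (-d) := by
  ext i j
  simp only [Matrix.transpose_apply, Fmat, Matrix.of_apply]
  by_cases hc : (i : ℤ) - j = -d
  · rw [if_pos (by omega : (j : ℤ) - i = d), if_pos hc, hsym j i]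
  · rw [if_neg (by omega), if_neg hc]

lemma norm_FtF_le {S : Matrix (Fin p) (Fin p) ℝ} (hsym : ∀ i j, S i j = S j i) (d : ℤ) :
    ‖(Fmat S d)ᵀ * Fmat S d‖ ≤ ‖S * S‖ := by
  refine le_of_sq_le' ?_ (norm_nonneg _)
  rw [norm_sq_eq, norm_sq_eq]
  refine Finset.sum_le_sum fun j _ => Finset.sum_le_sum fun l _ => ?_
  by_cases hjl : j = l
  · subst hjl
    have h1 : ((Fmat S d)ᵀ * Fmat S d) j j = ∑ i, (Fmat S d i j) ^ 2 := by
      rw [Matrix.mul_apply]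
      exact Finset.sum_congr rfl fun i _ => by rw [Matrix.transpose_apply, sq]
    have h2 : (S * S) j j = ∑ i, (S i j) ^ 2 := by
      rw [Matrix.mul_apply]
      exact Finset.sum_congr rfl fun i _ => by rw [hsym j i, sq]
    have h3 : ∑ i, (Fmat S d i j) ^ 2 ≤ ∑ i, (S i j) ^ 2 := by
      refine Finset.sum_le_sum fun i _ => ?_
      simp only [Fmat, Matrix.of_apply]
      split_ifs
      · exact le_rfl
      · simpa using sq_nonneg (S i j)
    have h0 : (0:ℝ) ≤ ∑ i, (Fmat S d i j) ^ 2 :=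
      Finset.sum_nonneg fun i _ => sq_nonneg _
    rw [h1, h2]
    exact pow_le_pow_left₀ h0 h3 2
  · have h1 : ((Fmat S d)ᵀ * Fmat S d) j l = 0 := by
      rw [Matrix.mul_apply]
      refine Finset.sum_eq_zero fun i _ => ?_
      simp only [Matrix.transpose_apply, Fmat, Matrix.of_apply]
      split_ifs with ha hb
      · exact absurd (Fin.ext (by omega : (j : ℕ) = l)) hjl
      · ring
      · ring
      · ring
    rw [h1]
    simpa using sq_nonneg ((S * S) j l)

lemma norm_FFt_le {S : Matrix (Fin p) (Fin p) ℝ} (hsym : ∀ i j, S i j = S j i) (d : ℤ) :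
    ‖Fmat S d * (Fmat S d)ᵀ‖ ≤ ‖S * S‖ := by
  rw [show Fmat S d = (Fmat S (-d))ᵀ from by rw [Fmat_transpose hsym, neg_neg],
    Matrix.transpose_transpose]
  exact norm_FtF_le hsym (-d)

lemma norm_pair_le {S X Y : Matrix (Fin p) (Fin p) ℝ}
    (hX : ‖Xᵀ * X‖ ≤ ‖S * S‖) (hY : ‖Y * Yᵀ‖ ≤ ‖S * S‖) : ‖X * Y‖ ≤ ‖S * S‖ := by
  refine le_of_sq_le' ?_ (norm_nonneg _)
  calc ‖X * Y‖ ^ 2 ≤ ‖Xᵀ * X‖ * ‖Y * Yᵀ‖ := norm_mul_sq_le X Y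
    _ ≤ ‖S * S‖ * ‖S * S‖ := mul_le_mul hX hY (norm_nonneg _) (norm_nonneg _)
    _ = ‖S * S‖ ^ 2 := (sq _).symm

lemma band_eq (S : Matrix (Fin p) (Fin p) ℝ) (k : ℕ) :
    bandMat S k = ∑ d ∈ Finset.Icc (-(k:ℤ)) (k:ℤ), Fmat S d := by
  ext i j
  simp only [bandMat, Fmat, Matrix.of_apply, Matrix.sum_apply]
  rw [Finset.sum_ite_eq (Finset.Icc (-(k:ℤ)) (k:ℤ)) ((i:ℤ) - j) (fun _ => S i j)]
  by_cases h : ((i:ℤ) - j).natAbs ≤ k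
  · rw [if_pos h, if_pos (Finset.mem_Icc.mpr (by omega))]
  · rw [if_neg h, if_neg (fun hc => h (by have := Finset.mem_Icc.mp hc; omega))]

lemma card_Icc_eq (k : ℕ) : (Finset.Icc (-(k:ℤ)) (k:ℤ)).card = 2 * k + 1 := by
  rw [Int.card_Icc]
  omega

end BandAux

open BandAux

/-- For a symmetric positive semidefinite Σ, `tr[{Σ(Σ − B_k(Σ))}²] ≤ 4(k+1)² tr(Σ⁴)`. -/
theorem trace_prod_banded_diff_le (p : ℕ) (S : Matrix (Fin p) (Fin p) ℝ)
    (hS : S.PosSemidef) (k : ℕ) (hk : k ≤ p - 1) :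
    Matrix.trace ((S * (S - bandMat S k)) ^ 2)
      ≤ 4 * ((k : ℝ) + 1) ^ 2 * Matrix.trace (S ^ 4) := by
  have hsym : ∀ i j, S i j = S j i := by
    intro i j
    have h := hS.1
    have h2 := congrFun (congrFun h i) j
    simpa [Matrix.conjTranspose_apply] using h2.symm
  set B := bandMat S k with hB
  set D := S - B with hD
  set c := ‖S * S‖ with hc
  have hSt : Sᵀ = S := by ext i j; exact hsym j i
  have hBt : Bᵀ = B := by
    ext i j
    simp only [Matrix.transpose_apply, hB, bandMat, Matrix.of_apply]
    by_cases h : ((j:ℤ) - i).natAbs ≤ k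
    · rw [if_pos h, if_pos (by omega), hsym j i]
    · rw [if_neg h, if_neg (by omega)]
  have hDt : Dᵀ = D := by rw [hD, Matrix.transpose_sub, hSt, hBt]
  have hSS1 : ‖Sᵀ * S‖ ≤ c := by rw [hSt]
  have hSS2 : ‖S * Sᵀ‖ ≤ c := by rw [hSt]
  have hcard : ((Finset.Icc (-(k:ℤ)) (k:ℤ)).card : ℝ) = 2 * k + 1 := by
    rw [card_Icc_eq]; push_cast; ring
  have hSB : ‖S * B‖ ≤ (2 * (k:ℝ) + 1) * c := by
    rw [hB, band_eq, Finset.mul_sum]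
    refine (norm_sum_le _ _).trans ?_
    calc ∑ d ∈ Finset.Icc (-(k:ℤ)) (k:ℤ), ‖S * Fmat S d‖
        ≤ ∑ d ∈ Finset.Icc (-(k:ℤ)) (k:ℤ), c :=
          Finset.sum_le_sum fun d _ => norm_pair_le hSS1 (norm_FFt_le hsym d)
      _ = ((Finset.Icc (-(k:ℤ)) (k:ℤ)).card : ℝ) * c := by
          rw [Finset.sum_const, nsmul_eq_mul]
      _ = (2 * (k:ℝ) + 1) * c := by rw [hcard]
  have hBS : ‖B * S‖ ≤ (2 * (k:ℝ) + 1) * c := by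
    rw [hB, band_eq, Finset.sum_mul]
    refine (norm_sum_le _ _).trans ?_
    calc ∑ d ∈ Finset.Icc (-(k:ℤ)) (k:ℤ), ‖Fmat S d * S‖
        ≤ ∑ d ∈ Finset.Icc (-(k:ℤ)) (k:ℤ), c :=
          Finset.sum_le_sum fun d _ => norm_pair_le (norm_FtF_le hsym d) hSS2
      _ = ((Finset.Icc (-(k:ℤ)) (k:ℤ)).card : ℝ) * c := by
          rw [Finset.sum_const, nsmul_eq_mul]
      _ = (2 * (k:ℝ) + 1) * c := by rw [hcard]
  have hBB : ‖B * B‖ ≤ (2 * (k:ℝ) + 1) ^ 2 * c := by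
    rw [hB, band_eq, Finset.sum_mul_sum]
    refine (norm_sum_le _ _).trans ?_
    have hinner : ∀ d : ℤ, ‖∑ e ∈ Finset.Icc (-(k:ℤ)) (k:ℤ), Fmat S d * Fmat S e‖
        ≤ (2 * (k:ℝ) + 1) * c := by
      intro d
      refine (norm_sum_le _ _).trans ?_
      calc ∑ e ∈ Finset.Icc (-(k:ℤ)) (k:ℤ), ‖Fmat S d * Fmat S e‖
          ≤ ∑ e ∈ Finset.Icc (-(k:ℤ)) (k:ℤ), c :=
            Finset.sum_le_sum fun e _ =>
              norm_pair_le (norm_FtF_le hsym d) (norm_FFt_le hsym e)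
        _ = ((Finset.Icc (-(k:ℤ)) (k:ℤ)).card : ℝ) * c := by
            rw [Finset.sum_const, nsmul_eq_mul]
        _ = (2 * (k:ℝ) + 1) * c := by rw [hcard]
    calc ∑ d ∈ Finset.Icc (-(k:ℤ)) (k:ℤ), ‖∑ e ∈ Finset.Icc (-(k:ℤ)) (k:ℤ), Fmat S d * Fmat S e‖
        ≤ ∑ d ∈ Finset.Icc (-(k:ℤ)) (k:ℤ), (2 * (k:ℝ) + 1) * c :=
          Finset.sum_le_sum fun d _ => hinner d
      _ = ((Finset.Icc (-(k:ℤ)) (k:ℤ)).card : ℝ) * ((2 * (k:ℝ) + 1) * c) := by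
          rw [Finset.sum_const, nsmul_eq_mul]
      _ = (2 * (k:ℝ) + 1) ^ 2 * c := by rw [hcard]; ring
  have hcn : (0:ℝ) ≤ c := norm_nonneg _
  have hDD : ‖D * D‖ ≤ (2 * (k:ℝ) + 2) ^ 2 * c := by
    have hexp : D * D = (S * S - S * B) - (B * S - B * B) := by
      rw [hD]; noncomm_ring
    rw [hexp]
    calc ‖(S * S - S * B) - (B * S - B * B)‖
        ≤ ‖S * S - S * B‖ + ‖B * S - B * B‖ := norm_sub_le _ _
      _ ≤ (‖S * S‖ + ‖S * B‖) + (‖B * S‖ + ‖B * B‖) :=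
          add_le_add (norm_sub_le _ _) (norm_sub_le _ _)
      _ ≤ (c + (2 * (k:ℝ) + 1) * c) + ((2 * (k:ℝ) + 1) * c + (2 * (k:ℝ) + 1) ^ 2 * c) := by
          exact add_le_add (add_le_add le_rfl hSB) (add_le_add hBS hBB)
      _ = (2 * (k:ℝ) + 2) ^ 2 * c := by ring
  have htr4 : Matrix.trace (S ^ 4) = c ^ 2 := by
    have hS4 : S ^ 4 = (S * S) * (S * S)ᵀ := by
      rw [Matrix.transpose_mul, hSt]
      rw [show (4:ℕ) = 2 + 2 from rfl, pow_add, sq]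
    rw [hS4, trace_mul_transpose_eq]
  have hmain : Matrix.trace ((S * D) * (S * D)) ≤ (2 * (k:ℝ) + 2) ^ 2 * c ^ 2 := by
    calc Matrix.trace ((S * D) * (S * D))
        ≤ ‖S * D‖ ^ 2 := trace_self_le _
      _ ≤ ‖Sᵀ * S‖ * ‖D * Dᵀ‖ := norm_mul_sq_le S D
      _ = c * ‖D * D‖ := by rw [hSt, hDt]
      _ ≤ c * ((2 * (k:ℝ) + 2) ^ 2 * c) := mul_le_mul_of_nonneg_left hDD hcn
      _ = (2 * (k:ℝ) + 2) ^ 2 * c ^ 2 := by ring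
  have hfin : Matrix.trace ((S * D) ^ 2) ≤ (2 * (k:ℝ) + 2) ^ 2 * c ^ 2 := by
    rw [sq]; exact hmain
  rw [htr4]
  calc Matrix.trace ((S * D) ^ 2) ≤ (2 * (k:ℝ) + 2) ^ 2 * c ^ 2 := hfin
    _ = 4 * ((k:ℝ) + 1) ^ 2 * c ^ 2 := by ring
end
end

section
/- Let Γ be a p×m real matrix with Σ = ΓΓᵀ, tr(Σ²) > 0, let k ∈ {0,…,p−1}, Δ ≥ −2 and n ≥ 2, and define ν_{nk}² and δ_{nk} = (tr(Σ²) − tr[{B_k(Σ)}²])/ν_{nk}, r_k = tr[{B_k(Σ)}²]/tr(Σ²). Then δ_{nk} ≤ (n/2)(1 − r_k). If moreover ν_{nk}² ≤ C₀ a_{np} tr²(Σ²) for a constant C₀ > 0, where a_{np} = n^{−2} + k²(np)^{−1}, then also δ_{nk} ≥ (C₀ a_{np})^{−1/2}(1 − r_k). -/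
open Matrix

noncomputable section

/-- The asymptotic variance `ν_{nk}²`. -/
def nu2 {p m : ℕ} (Γ : Matrix (Fin p) (Fin m) ℝ) (k n : ℕ) (Δ : ℝ) : ℝ :=
  4 / (n : ℝ) ^ 2 * (Matrix.trace ((Γ * Γᵀ) ^ 2)) ^ 2
    + 8 / (n : ℝ) *
        Matrix.trace (((Γ * Γᵀ) * ((Γ * Γᵀ) - bandMat (Γ * Γᵀ) k)) ^ 2)
    + 4 * Δ / (n : ℝ) *
        Matrix.trace
          (Matrix.hadamard (Γᵀ * ((Γ * Γᵀ) - bandMat (Γ * Γᵀ) k) * Γ)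
            (Γᵀ * ((Γ * Γᵀ) - bandMat (Γ * Γᵀ) k) * Γ))


lemma trace_sq_eq {p : ℕ} (X : Matrix (Fin p) (Fin p) ℝ) :
    Matrix.trace (X ^ 2) = ∑ i, ∑ j, X i j * X j i := by
  simp [sq, Matrix.trace, Matrix.mul_apply, Matrix.diag]

lemma trace_sq_eq_symm {p : ℕ} (X : Matrix (Fin p) (Fin p) ℝ) (h : Xᵀ = X) :
    Matrix.trace (X ^ 2) = ∑ i, ∑ j, (X i j) ^ 2 := by
  rw [trace_sq_eq]
  refine Finset.sum_congr rfl fun i _ => Finset.sum_congr rfl fun j _ => ?_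
  have h2 : X j i = X i j := congrFun (congrFun h i) j
  rw [h2, sq]

lemma bandMat_transpose {p : ℕ} (S : Matrix (Fin p) (Fin p) ℝ) (k : ℕ) (h : Sᵀ = S) :
    (bandMat S k)ᵀ = bandMat S k := by
  ext i j
  simp only [Matrix.transpose_apply, bandMat, Matrix.of_apply]
  have h1 : ((j : ℤ) - i).natAbs = ((i : ℤ) - j).natAbs := by omega
  have h2 : S j i = S i j := congrFun (congrFun h i) j
  rw [h1, h2]

lemma band_trace_le {p : ℕ} (S : Matrix (Fin p) (Fin p) ℝ) (k : ℕ) (h : Sᵀ = S) :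
    Matrix.trace ((bandMat S k) ^ 2) ≤ Matrix.trace (S ^ 2) := by
  rw [trace_sq_eq_symm _ h, trace_sq_eq_symm _ (bandMat_transpose S k h)]
  refine Finset.sum_le_sum fun i _ => Finset.sum_le_sum fun j _ => ?_
  simp only [bandMat, Matrix.of_apply]
  split_ifs
  · exact le_refl _
  · simpa using sq_nonneg (S i j)


lemma trace_SA_eq {p m : ℕ} (Γ : Matrix (Fin p) (Fin m) ℝ) (A : Matrix (Fin p) (Fin p) ℝ) :
    Matrix.trace (((Γ * Γᵀ) * A) ^ 2) = Matrix.trace ((Γᵀ * A * Γ) ^ 2) := by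
  rw [sq, sq]
  calc Matrix.trace ((Γ * Γᵀ * A) * (Γ * Γᵀ * A))
      = Matrix.trace (Γ * (Γᵀ * A * Γ * (Γᵀ * A))) := by
        congr 1; simp only [Matrix.mul_assoc]
    _ = Matrix.trace ((Γᵀ * A * Γ * (Γᵀ * A)) * Γ) := Matrix.trace_mul_comm _ _
    _ = Matrix.trace ((Γᵀ * A * Γ) * (Γᵀ * A * Γ)) := by
        congr 1; simp only [Matrix.mul_assoc]

lemma trace_sq_nonneg {p : ℕ} (X : Matrix (Fin p) (Fin p) ℝ) (h : Xᵀ = X) :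
    0 ≤ Matrix.trace (X ^ 2) := by
  rw [trace_sq_eq_symm _ h]
  positivity

lemma hadamard_trace_eq {p : ℕ} (X : Matrix (Fin p) (Fin p) ℝ) :
    Matrix.trace (Matrix.hadamard X X) = ∑ i, (X i i) ^ 2 := by
  simp [Matrix.trace, Matrix.hadamard, Matrix.diag, sq]

lemma hadamard_trace_le {p : ℕ} (X : Matrix (Fin p) (Fin p) ℝ) (h : Xᵀ = X) :
    Matrix.trace (Matrix.hadamard X X) ≤ Matrix.trace (X ^ 2) := by
  rw [hadamard_trace_eq, trace_sq_eq_symm _ h]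
  calc ∑ i, (X i i) ^ 2 = ∑ i, ∑ j ∈ ({i} : Finset (Fin p)), (X i j)^2 := by simp
    _ ≤ ∑ i, ∑ j, (X i j) ^ 2 := by
        refine Finset.sum_le_sum fun i _ => ?_
        refine Finset.sum_le_sum_of_subset_of_nonneg (Finset.subset_univ _) ?_
        intro j _ _; positivity

lemma hadamard_trace_nonneg {p : ℕ} (X : Matrix (Fin p) (Fin p) ℝ) :
    0 ≤ Matrix.trace (Matrix.hadamard X X) := by
  rw [hadamard_trace_eq]; positivity

/-- Bound (2.9) of Qiu–Chen on the signal-to-noise ratio: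
`δ_{nk} ≤ (n/2)(1 − r_k)`, and `(C₀ a_{np})^{-1/2}(1 − r_k) ≤ δ_{nk}` whenever
`ν_{nk}² ≤ C₀ a_{np} tr²(Σ²)`. -/
theorem snr_bounds (p m n k : ℕ) (Γ : Matrix (Fin p) (Fin m) ℝ) (Δ : ℝ)
    (hn : 2 ≤ n) (hk : k ≤ p - 1) (hΔ : -2 ≤ Δ)
    (htr : 0 < Matrix.trace ((Γ * Γᵀ) ^ 2)) :
    (Matrix.trace ((Γ * Γᵀ) ^ 2) - Matrix.trace ((bandMat (Γ * Γᵀ) k) ^ 2))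
          / Real.sqrt (nu2 Γ k n Δ)
        ≤ (n : ℝ) / 2
          * (1 - Matrix.trace ((bandMat (Γ * Γᵀ) k) ^ 2) / Matrix.trace ((Γ * Γᵀ) ^ 2))
    ∧ ∀ C₀ : ℝ, 0 < C₀ →
        nu2 Γ k n Δ
            ≤ C₀ * (((n : ℝ) ^ 2)⁻¹ + (k : ℝ) ^ 2 * ((n : ℝ) * (p : ℝ))⁻¹)
              * (Matrix.trace ((Γ * Γᵀ) ^ 2)) ^ 2 →
        (C₀ * (((n : ℝ) ^ 2)⁻¹ + (k : ℝ) ^ 2 * ((n : ℝ) * (p : ℝ))⁻¹)) ^ (-(1 : ℝ) / 2)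
            * (1 - Matrix.trace ((bandMat (Γ * Γᵀ) k) ^ 2) / Matrix.trace ((Γ * Γᵀ) ^ 2))
          ≤ (Matrix.trace ((Γ * Γᵀ) ^ 2) - Matrix.trace ((bandMat (Γ * Γᵀ) k) ^ 2))
              / Real.sqrt (nu2 Γ k n Δ) := by
  set S : Matrix (Fin p) (Fin p) ℝ := Γ * Γᵀ with hSdef
  set A : Matrix (Fin p) (Fin p) ℝ := S - bandMat S k with hAdef
  set M : Matrix (Fin m) (Fin m) ℝ := Γᵀ * A * Γ with hMdef
  set T : ℝ := Matrix.trace (S ^ 2) with hTdef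
  set B : ℝ := Matrix.trace ((bandMat S k) ^ 2) with hBdef
  have hS : Sᵀ = S := by
    rw [hSdef, Matrix.transpose_mul, Matrix.transpose_transpose]
  have hA : Aᵀ = A := by
    rw [hAdef, Matrix.transpose_sub, hS, bandMat_transpose S k hS]
  have hM : Mᵀ = M := by
    rw [hMdef, Matrix.transpose_mul, Matrix.transpose_mul, hA,
      Matrix.transpose_transpose, Matrix.mul_assoc]
  have hnpos : (0 : ℝ) < n := by positivity
  have hTB : B ≤ T := band_trace_le S k hS
  have hTBnn : 0 ≤ T - B := by linarith
  have hSA : Matrix.trace ((S * A) ^ 2) = Matrix.trace (M ^ 2) := trace_SA_eq Γ A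
  have hM2 : 0 ≤ Matrix.trace (M ^ 2) := trace_sq_nonneg M hM
  have hHle : Matrix.trace (Matrix.hadamard M M) ≤ Matrix.trace (M ^ 2) :=
    hadamard_trace_le M hM
  have hHnn : 0 ≤ Matrix.trace (Matrix.hadamard M M) := hadamard_trace_nonneg M
  have hnu_eq : nu2 Γ k n Δ = 4 / (n : ℝ) ^ 2 * T ^ 2 + 8 / (n : ℝ) * Matrix.trace (M ^ 2)
      + 4 * Δ / (n : ℝ) * Matrix.trace (Matrix.hadamard M M) := by
    rw [nu2, ← hSdef, ← hAdef, ← hMdef, ← hTdef, hSA]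
  have hrest : 0 ≤ 8 / (n : ℝ) * Matrix.trace (M ^ 2)
      + 4 * Δ / (n : ℝ) * Matrix.trace (Matrix.hadamard M M) := by
    have h8 : 0 ≤ 8 * Matrix.trace (M ^ 2) + 4 * Δ * Matrix.trace (Matrix.hadamard M M) := by
      nlinarith [mul_nonneg (by linarith : (0:ℝ) ≤ Δ + 2) hHnn]
    have heq : 8 / (n : ℝ) * Matrix.trace (M ^ 2)
        + 4 * Δ / (n : ℝ) * Matrix.trace (Matrix.hadamard M M)
        = (8 * Matrix.trace (M ^ 2) + 4 * Δ * Matrix.trace (Matrix.hadamard M M)) / n := by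
      ring
    rw [heq]
    exact div_nonneg h8 hnpos.le
  have hnu_lb : 4 / (n : ℝ) ^ 2 * T ^ 2 ≤ nu2 Γ k n Δ := by
    rw [hnu_eq]; linarith
  have hnupos : 0 < nu2 Γ k n Δ := lt_of_lt_of_le (by positivity) hnu_lb
  have hsqrtpos : 0 < Real.sqrt (nu2 Γ k n Δ) := Real.sqrt_pos.mpr hnupos
  have hsqrt_lb : 2 * T / n ≤ Real.sqrt (nu2 Γ k n Δ) := by
    rw [show (2 * T / n : ℝ) = Real.sqrt ((2 * T / n) ^ 2) from
      (Real.sqrt_sq (by positivity)).symm]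
    apply Real.sqrt_le_sqrt
    calc (2 * T / n) ^ 2 = 4 / (n : ℝ) ^ 2 * T ^ 2 := by field_simp; ring
      _ ≤ nu2 Γ k n Δ := hnu_lb
  constructor
  · have key1 : (T - B) / Real.sqrt (nu2 Γ k n Δ) ≤ (T - B) / (2 * T / n) := by
      gcongr
    calc (T - B) / Real.sqrt (nu2 Γ k n Δ) ≤ (T - B) / (2 * T / n) := key1
      _ = (n : ℝ) / 2 * (1 - B / T) := by field_simp
  · intro C₀ hC₀ hbound
    set a : ℝ := ((n : ℝ) ^ 2)⁻¹ + (k : ℝ) ^ 2 * ((n : ℝ) * (p : ℝ))⁻¹ with hadef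
    have ha : 0 < a := by
      have h1 : (0 : ℝ) < ((n : ℝ) ^ 2)⁻¹ := by positivity
      have h2 : (0 : ℝ) ≤ (k : ℝ) ^ 2 * ((n : ℝ) * (p : ℝ))⁻¹ := by positivity
      rw [hadef]; linarith
    have hCa : 0 < C₀ * a := mul_pos hC₀ ha
    have hsCa : 0 < Real.sqrt (C₀ * a) := Real.sqrt_pos.mpr hCa
    have hsqrt_ub : Real.sqrt (nu2 Γ k n Δ) ≤ Real.sqrt (C₀ * a) * T := by
      calc Real.sqrt (nu2 Γ k n Δ) ≤ Real.sqrt (C₀ * a * T ^ 2) := Real.sqrt_le_sqrt hbound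
        _ = Real.sqrt (C₀ * a) * T := by
            rw [Real.sqrt_mul hCa.le, Real.sqrt_sq htr.le]
    have hrpow : (C₀ * a) ^ (-(1 : ℝ) / 2) = (Real.sqrt (C₀ * a))⁻¹ := by
      rw [neg_div, Real.rpow_neg hCa.le, Real.sqrt_eq_rpow]
    rw [hrpow]
    have hLHS : (Real.sqrt (C₀ * a))⁻¹ * (1 - B / T) = (T - B) / (Real.sqrt (C₀ * a) * T) := by
      field_simp
    rw [hLHS]
    gcongr
end
end

section
/- Let Σ = (σ_{ij}) be a symmetric positive semidefinite p×p real matrix that is banded with bandwidth k₀, i.e. σ_{ij} = 0 whenever |i−j| > k₀. Then tr(Σ²) ≤ (2k₀ + 1) tr[{B₀(Σ)}²] = (2k₀ + 1) Σ_{l=1}^{p} σ_{ll}². Consequently, if tr(Σ²) > 0, then for every k ∈ {0,…,p−1} the ratio r_k = tr[{B_k(Σ)}²]/tr(Σ²) satisfies r_k ≥ (2k₀ + 1)^{−1}. -/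
open Matrix

noncomputable section

private lemma quadform {p : ℕ} {S : Matrix (Fin p) (Fin p) ℝ} (hS : S.PosSemidef) (i j : Fin p)
    (a b : ℝ) : 0 ≤ a^2 * S i i + 2*a*b*(S i j) + b^2 * S j j := by
  have hji : S j i = S i j := by
    have := hS.1.apply i j; simpa using this
  have h := hS.dotProduct_mulVec_nonneg (fun t => (if t = i then a else 0) + (if t = j then b else 0))
  simp only [star_trivial, dotProduct, mulVec, Finset.mul_sum, Finset.sum_add_distrib,
    mul_ite, ite_mul, mul_one, mul_zero, zero_mul, mul_add, add_mul, Finset.sum_ite_eq',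
    Finset.mem_univ, if_true, add_zero, zero_add] at h
  rw [hji] at h; nlinarith [h]

private lemma entry_sq {p : ℕ} {S : Matrix (Fin p) (Fin p) ℝ} (hS : S.PosSemidef) (i j : Fin p) :
    (S i j)^2 ≤ S i i * S j j := by
  have h1 := quadform hS i j (S j j) (-(S i j))
  have h2 := quadform hS i j (S i j) (-(S i i))
  have h3 := quadform hS i j 1 1
  have h4 := quadform hS i j 1 (-1)
  have h5 := quadform hS i j 1 0
  have h6 := quadform hS i j 0 1
  have h5' : 0 ≤ S i i := by nlinarith [h5]
  have h6' : 0 ≤ S j j := by nlinarith [h6]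
  rcases eq_or_lt_of_le h6' with h | h
  · rw [h.symm] at h2 h3 h4 ⊢
    have hprod : S i i * (S i j)^2 = 0 :=
      le_antisymm (by nlinarith [h2]) (mul_nonneg h5' (sq_nonneg _))
    have hc : S i j = 0 := by
      rcases mul_eq_zero.1 hprod with h0 | h0
      · nlinarith [h3, h4]
      · exact pow_eq_zero_iff (two_ne_zero) |>.1 h0
    rw [hc]; simp
  · nlinarith

private lemma trace_band_sq {p : ℕ} (S : Matrix (Fin p) (Fin p) ℝ)
    (hsym : ∀ i j, S j i = S i j) (k : ℕ) :
    Matrix.trace ((bandMat S k) ^ 2)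
      = ∑ i : Fin p, ∑ j : Fin p, if ((i : ℤ) - (j : ℤ)).natAbs ≤ k then (S i j)^2 else 0 := by
  rw [pow_two]
  simp only [Matrix.trace, Matrix.diag, Matrix.mul_apply, bandMat, Matrix.of_apply]
  refine Finset.sum_congr rfl fun i _ => Finset.sum_congr rfl fun j _ => ?_
  have hd : (((j : ℤ) - (i : ℤ)).natAbs ≤ k) ↔ (((i : ℤ) - (j : ℤ)).natAbs ≤ k) := by omega
  by_cases h : ((i : ℤ) - (j : ℤ)).natAbs ≤ k
  · simp only [if_pos h, if_pos (hd.2 h), hsym i j]; ring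
  · simp only [if_neg h, if_neg (fun hh => h (hd.1 hh)), zero_mul]

private lemma card_band {p k₀ : ℕ} (i : Fin p) :
    (Finset.univ.filter (fun j : Fin p => ((i : ℤ) - (j : ℤ)).natAbs ≤ k₀)).card ≤ 2 * k₀ + 1 := by
  have hle : (Finset.univ.filter (fun j : Fin p => ((i : ℤ) - (j : ℤ)).natAbs ≤ k₀)).card
      ≤ (Finset.Icc ((i:ℤ) - k₀) ((i:ℤ) + k₀)).card := by
    apply Finset.card_le_card_of_injOn (fun j : Fin p => (j : ℤ))
    · intro j hj
      simp only [Finset.coe_filter, Finset.mem_coe, Set.mem_setOf_eq, Finset.mem_filter, Finset.mem_univ, true_and] at hj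
      simp only [Finset.coe_Icc, Finset.mem_coe, Set.mem_Icc, Finset.mem_Icc]
      omega
    · intro a _ b _ h
      apply Fin.ext
      have h' : ((a : ℕ) : ℤ) = ((b : ℕ) : ℤ) := h
      exact_mod_cast h'
  calc _ ≤ (Finset.Icc ((i:ℤ) - k₀) ((i:ℤ) + k₀)).card := hle
    _ = 2 * k₀ + 1 := by rw [Int.card_Icc]; omega

/-- If the positive semidefinite Σ is banded with bandwidth k₀, then
`tr(Σ²) ≤ (2k₀+1) tr[{B₀(Σ)}²] = (2k₀+1) ∑_l σ_ll²`, and hence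
`r_k = tr[{B_k(Σ)}²]/tr(Σ²) ≥ (2k₀+1)⁻¹` for every k. -/
theorem trace_sq_le_banded (p k₀ : ℕ) (S : Matrix (Fin p) (Fin p) ℝ)
    (hS : S.PosSemidef)
    (hband : ∀ i j : Fin p, k₀ < ((i : ℤ) - (j : ℤ)).natAbs → S i j = 0) :
    Matrix.trace (S ^ 2) ≤ (2 * (k₀ : ℝ) + 1) * Matrix.trace ((bandMat S 0) ^ 2)
    ∧ Matrix.trace ((bandMat S 0) ^ 2) = ∑ l : Fin p, (S l l) ^ 2
    ∧ (0 < Matrix.trace (S ^ 2) →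
        ∀ k ≤ p - 1,
          (2 * (k₀ : ℝ) + 1)⁻¹
            ≤ Matrix.trace ((bandMat S k) ^ 2) / Matrix.trace (S ^ 2)) := by
  have hsym : ∀ i j : Fin p, S j i = S i j := fun i j => by
    have := hS.1.apply i j; simpa using this
  -- Part 2
  have h2 : Matrix.trace ((bandMat S 0) ^ 2) = ∑ l : Fin p, (S l l) ^ 2 := by
    rw [trace_band_sq S hsym 0]
    refine Finset.sum_congr rfl fun i _ => ?_
    have heq : ∀ j : Fin p, (if ((i : ℤ) - (j : ℤ)).natAbs ≤ 0 then (S i j)^2 else 0)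
        = if j = i then (S i j)^2 else 0 := by
      intro j
      congr 1
      simp only [eq_iff_iff]
      constructor
      · intro h; exact Fin.ext (by omega)
      · intro h; subst h; omega
    rw [Finset.sum_congr rfl fun j _ => heq j, Finset.sum_ite_eq' Finset.univ i
      (fun j => (S i j)^2)]
    simp
  -- trace(S^2) as a double sum of squares
  have htr : Matrix.trace (S ^ 2) = ∑ i : Fin p, ∑ j : Fin p, (S i j)^2 := by
    rw [pow_two]
    simp only [Matrix.trace, Matrix.diag, Matrix.mul_apply]
    refine Finset.sum_congr rfl fun i _ => Finset.sum_congr rfl fun j _ => ?_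
    rw [hsym i j]; ring
  -- Part 1
  have h1 : Matrix.trace (S ^ 2) ≤ (2 * (k₀ : ℝ) + 1) * Matrix.trace ((bandMat S 0) ^ 2) := by
    rw [htr, h2]
    have step1 : ∑ i : Fin p, ∑ j : Fin p, (S i j)^2
        ≤ ∑ i : Fin p, ∑ j : Fin p,
          (if ((i : ℤ) - (j : ℤ)).natAbs ≤ k₀ then (S i i)^2 else 0) := by
      have half : ∀ i j : Fin p, (S i j)^2
          ≤ (if ((i : ℤ) - (j : ℤ)).natAbs ≤ k₀ then ((S i i)^2 + (S j j)^2)/2 else 0) := by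
        intro i j
        by_cases h : ((i : ℤ) - (j : ℤ)).natAbs ≤ k₀
        · rw [if_pos h]
          have := entry_sq hS i j
          nlinarith [sq_nonneg (S i i - S j j)]
        · rw [if_neg h, hband i j (by omega)]
          simp
      calc ∑ i : Fin p, ∑ j : Fin p, (S i j)^2
          ≤ ∑ i : Fin p, ∑ j : Fin p,
            (if ((i : ℤ) - (j : ℤ)).natAbs ≤ k₀ then ((S i i)^2 + (S j j)^2)/2 else 0) :=
            Finset.sum_le_sum fun i _ => Finset.sum_le_sum fun j _ => half i j
        _ = ∑ i : Fin p, ∑ j : Fin p,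
            (if ((i : ℤ) - (j : ℤ)).natAbs ≤ k₀ then (S i i)^2 else 0) := by
            have expand : ∀ i j : Fin p,
                (if ((i : ℤ) - (j : ℤ)).natAbs ≤ k₀ then ((S i i)^2 + (S j j)^2)/2 else 0)
                = (if ((i : ℤ) - (j : ℤ)).natAbs ≤ k₀ then (S i i)^2/2 else 0)
                  + (if ((i : ℤ) - (j : ℤ)).natAbs ≤ k₀ then (S j j)^2/2 else 0) := by
              intro i j; split <;> ring
            simp only [expand, Finset.sum_add_distrib]
            have swap : ∑ i : Fin p, ∑ j : Fin p,
                (if ((i : ℤ) - (j : ℤ)).natAbs ≤ k₀ then (S j j)^2/2 else 0)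
                = ∑ i : Fin p, ∑ j : Fin p,
                (if ((i : ℤ) - (j : ℤ)).natAbs ≤ k₀ then (S i i)^2/2 else 0) := by
              rw [Finset.sum_comm]
              refine Finset.sum_congr rfl fun i _ => Finset.sum_congr rfl fun j _ => ?_
              congr 1
              simp only [eq_iff_iff]; omega
            rw [swap, ← Finset.sum_add_distrib]
            refine Finset.sum_congr rfl fun i _ => ?_
            rw [← Finset.sum_add_distrib]
            refine Finset.sum_congr rfl fun j _ => ?_
            split <;> ring
    refine step1.trans ?_
    rw [Finset.mul_sum]
    refine Finset.sum_le_sum fun i _ => ?_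
    rw [← Finset.sum_filter, Finset.sum_const, nsmul_eq_mul]
    have hc := card_band (k₀ := k₀) i
    have hcc : ((Finset.univ.filter
        (fun j : Fin p => ((i : ℤ) - (j : ℤ)).natAbs ≤ k₀)).card : ℝ) ≤ 2 * (k₀:ℝ) + 1 := by
      exact_mod_cast hc
    exact mul_le_mul_of_nonneg_right hcc (sq_nonneg _)
  refine ⟨h1, h2, ?_⟩
  intro hpos k _
  have hmono : Matrix.trace ((bandMat S 0) ^ 2) ≤ Matrix.trace ((bandMat S k) ^ 2) := by
    rw [trace_band_sq S hsym 0, trace_band_sq S hsym k]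
    refine Finset.sum_le_sum fun i _ => Finset.sum_le_sum fun j _ => ?_
    by_cases h : ((i : ℤ) - (j : ℤ)).natAbs ≤ 0
    · rw [if_pos h, if_pos (by omega)]
    · rw [if_neg h]; split
      · exact sq_nonneg _
      · exact le_refl 0
  have hden : (0:ℝ) < 2 * (k₀ : ℝ) + 1 := by positivity
  rw [le_div_iff₀ hpos, inv_mul_le_iff₀ hden]
  exact h1.trans (by nlinarith [hmono])
end
end
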